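/- arXiv:2401.09764 — 3 statements merged into one kernel-verified Lean document; each statement's English description precedes it below -/
import Mathlib

section
/- Let (T,w) be a weighted tree with total weight n > 0, where weights are non-negative integers. Then all centroids of (T,w) lie on a path P with endpoints c1 and c2 such that the total weight of all vertices in the maximal subtree of T containing the internal vertices of P but not its endpoints is zero. Moreover, if c1 ≠ c2 then hs(c1) = hs(c2) = n/2, and the components of T − E(P) containing c1 and c2 each have weight n/2; if c1 = c2 = c then hs(c) < n/2. -/
open SimpleGraph
open scoped Classical

/-- Weight of the connected component of `u` in `T - v`: total weight of all vertices
reachable from `u` by a walk avoiding `v`. -/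
noncomputable def compWeight {V : Type*} [Fintype V] (T : SimpleGraph V) (w : V → ℕ)
    (v u : V) : ℕ :=
  ∑ y : V, if ∃ p : T.Walk u y, v ∉ p.support then w y else 0

/-- The heaviest subtree weight of `v`: maximum weight of a connected component of `T - v`. -/
noncomputable def hs {V : Type*} [Fintype V] (T : SimpleGraph V) (w : V → ℕ) (v : V) : ℕ :=
  Finset.univ.sup fun u => compWeight T w v u

/-- A centroid is a vertex minimizing the heaviest subtree weight. -/
def IsCentroid {V : Type*} [Fintype V] (T : SimpleGraph V) (w : V → ℕ) (v : V) : Prop :=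
  ∀ u, hs T w v ≤ hs T w u
/-- Weight of the maximal subtree of T containing c but no other vertex of the path p:
the total weight of vertices reachable from c via a walk meeting p only at c. -/
noncomputable def sideWeight {V : Type*} [Fintype V] (T : SimpleGraph V) (w : V → ℕ)
    {a b : V} (p : T.Walk a b) (c : V) : ℕ :=
  ∑ y : V, if ∃ q : T.Walk c y, ∀ x ∈ q.support, x ∈ p.support → x = c then w y else 0

/-!
In a tree the branches at `a` and at `b` across an edge `ab` partition the vertices, and for any
`x ≠ y` the branch at `x` containing `y` and the branch at `y` containing `x` cover them; hence
`n ≤ hs x + hs y`, so at most one vertex has `2 hs < n`. A heavy branch (weight `> n/2`) at `v`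
containing the neighbour `u` contains a strictly smaller heavy branch at `u` unless
`2 hs u ≤ n`, so the minimum of `hs` is at most `n/2`. When it equals `n/2`, take two centroids `c1`, `c2` at maximal
distance. A further centroid off the path between them would leave it at an interior vertex
separating all three, and the three disjoint branches at that vertex force their `hs` values to
add up to at least `2n > 3n/2`. Finally `T_{c1}` is the branch at the second vertex of the path
containing `c1`, of weight `n - (branch at c1 towards c2) ≥ n - hs c1 = n/2`, and `T_{c1}`,
`T_{c2}` are disjoint.
-/

open Finset

namespace SimpleGraph

variable {V : Type*} {G T : SimpleGraph V}

lemma Walk.IsPath.start_notMem_support_dropUntil {x y t : V} {q : G.Walk x y} (hq : q.IsPath)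
    (ht : t ∈ q.support) (hne : x ≠ t) : x ∉ (q.dropUntil t ht).support := by
  rw [← q.take_spec ht] at hq
  exact fun hx => hq.ne_of_mem_support_of_append hne (Walk.start_mem_support _) hx rfl

protected lemma Walk.IsPath.append {u v x : V} {p : G.Walk u v} {q : G.Walk v x}
    (hp : p.IsPath) (hq : q.IsPath) (h : ∀ y ∈ p.support, y ∈ q.support → y = v) :
    (p.append q).IsPath := by
  rw [Walk.isPath_def, Walk.support_append, List.nodup_append']
  refine ⟨hp.support_nodup, (List.tail_sublist _).nodup hq.support_nodup, fun y hyp hyq => ?_⟩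
  have hq' := hq.support_nodup
  rw [← q.cons_tail_support, List.nodup_cons] at hq'
  exact hq'.1 (h y hyp (List.mem_of_mem_tail hyq) ▸ hyq)

lemma Walk.exists_isPath_to_first_mem (s : Set V) {z a : V} (q : G.Walk z a) (ha : a ∈ s) :
    ∃ t ∈ s, ∃ r : G.Walk z t, r.IsPath ∧ ∀ x ∈ r.support, x ∈ s → x = t := by
  suffices ∃ t ∈ s, ∃ r : G.Walk z t, ∀ x ∈ r.support, x ∈ s → x = t by
    obtain ⟨t, ht, r, hr⟩ := this
    exact ⟨t, ht, r.bypass, r.bypass_isPath,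
      fun x hx => hr x (r.support_bypass_subset_support hx)⟩
  induction q with
  | nil => exact ⟨_, ha, .nil, by simp⟩
  | @cons z b a h q ih =>
    by_cases hz : z ∈ s
    · exact ⟨z, hz, .nil, by simp⟩
    obtain ⟨t, ht, r, hr⟩ := ih ha
    refine ⟨t, ht, .cons h r, fun x hx hxs => ?_⟩
    rcases (Walk.mem_support_iff _).mp hx with rfl | hx
    exacts [absurd hxs hz, hr x hx hxs]

def AvoidingReach (G : SimpleGraph V) (v u y : V) : Prop :=
  ∃ p : G.Walk u y, v ∉ p.support

namespace AvoidingReach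

variable {v u y z : V}

lemma refl (h : u ≠ v) : G.AvoidingReach v u u :=
  ⟨.nil, by simpa using h.symm⟩

lemma symm : G.AvoidingReach v u y → G.AvoidingReach v y u := fun ⟨p, hp⟩ =>
  ⟨p.reverse, by simpa using hp⟩

lemma trans : G.AvoidingReach v u y → G.AvoidingReach v y z → G.AvoidingReach v u z :=
  fun ⟨p, hp⟩ ⟨q, hq⟩ => ⟨p.append q, by simp [Walk.mem_support_append_iff, hp, hq]⟩

lemma ne_left : G.AvoidingReach v u y → u ≠ v := by
  rintro ⟨p, hp⟩ rfl
  exact hp p.start_mem_support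

end AvoidingReach

lemma Preconnected.exists_adj_avoidingReach (hG : G.Preconnected) {v u : V} (hne : v ≠ u) :
    ∃ a, G.Adj v a ∧ G.AvoidingReach v a u := by
  obtain ⟨p⟩ := hG v u
  obtain ⟨a, h, p', hp⟩ := Walk.exists_eq_cons_of_ne hne p.bypass
  have hpath := p.bypass_isPath
  rw [hp, Walk.cons_isPath_iff] at hpath
  exact ⟨a, h, p', hpath.2⟩

noncomputable def IsTree.path (hT : T.IsTree) (x y : V) : T.Walk x y :=
  (hT.existsUnique_path x y).choose

lemma IsTree.isPath_path (hT : T.IsTree) (x y : V) : (hT.path x y).IsPath :=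
  (hT.existsUnique_path x y).choose_spec.1

lemma IsTree.eq_path (hT : T.IsTree) {x y : V} {q : T.Walk x y} (hq : q.IsPath) :
    q = hT.path x y :=
  (hT.existsUnique_path x y).choose_spec.2 q hq

lemma IsTree.mem_support_of_mem_path (hT : T.IsTree) {x y t : V}
    (h : t ∈ (hT.path x y).support) (q : T.Walk x y) : t ∈ q.support :=
  q.support_bypass_subset_support (hT.eq_path q.bypass_isPath ▸ h)

lemma IsTree.not_avoidingReach_of_mem_path (hT : T.IsTree) {x y t : V}
    (h : t ∈ (hT.path x y).support) : ¬ T.AvoidingReach t x y :=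
  fun ⟨q, hq⟩ => hq (hT.mem_support_of_mem_path h q)

lemma IsTree.avoidingReach_or (hT : T.IsTree) {t x : V} (hne : t ≠ x) (y : V) :
    T.AvoidingReach t x y ∨ T.AvoidingReach x t y := by
  by_cases h : t ∈ (hT.path x y).support
  · exact .inr ⟨_, (hT.isPath_path x y).start_notMem_support_dropUntil h hne.symm⟩
  · exact .inl ⟨_, h⟩

lemma IsTree.avoidingReach_iff_of_adj (hT : T.IsTree) {a b : V} (h : T.Adj a b) (y : V) :
    T.AvoidingReach a b y ↔ ¬ T.AvoidingReach b a y := by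
  refine ⟨fun ⟨p, hp⟩ ⟨q, hq⟩ => ?_, (hT.avoidingReach_or h.ne y).resolve_right⟩
  have hb : b ∉ (hT.path a y).support := fun hb => hq (hT.mem_support_of_mem_path hb q)
  have hcons := hT.eq_path ((hT.isPath_path a y).cons hb : (Walk.cons h.symm _).IsPath)
  exact hp (hT.mem_support_of_mem_path (hcons ▸ by simp) p)

lemma IsTree.avoidingReach_of_not_avoidingReach (hT : T.IsTree) {v u y z : V} (hvu : v ≠ u)
    (hy : ¬ T.AvoidingReach u v y) (hz : T.AvoidingReach u y z) : T.AvoidingReach v u z :=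
  (hT.avoidingReach_or hvu z).resolve_right fun h => hy (h.trans hz.symm)

lemma IsTree.not_avoidingReach_of_adj_of_adj (hT : T.IsTree) {u v a : V} (hv : T.Adj u v)
    (ha : T.Adj u a) (hva : v ≠ a) : ¬ T.AvoidingReach u v a := fun h =>
  (hT.avoidingReach_iff_of_adj ha v).mp h.symm ⟨.cons hv .nil, by simp [ha.ne', hva.symm]⟩

lemma IsTree.exists_mem_path_ne_of_length_le (hT : T.IsTree) {a b z : V} {P : T.Walk a b}
    (hP : P.IsPath) (hz : z ∉ P.support) (hza : (hT.path z a).length ≤ P.length)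
    (hzb : (hT.path z b).length ≤ P.length) :
    ∃ t, t ≠ a ∧ t ≠ b ∧ t ≠ z ∧ t ∈ P.support ∧ t ∈ (hT.path z a).support ∧
      t ∈ (hT.path z b).support := by
  obtain ⟨t, ht, r, hr, hmeet⟩ :=
    (hT.path z a).exists_isPath_to_first_mem {x | x ∈ P.support} P.start_mem_support
  have hza' : r.append (P.takeUntil t ht).reverse = hT.path z a :=
    hT.eq_path <| hr.append (hP.takeUntil ht).reverse fun x hx hx' =>
      hmeet x hx (P.support_takeUntil_subset_support ht (by simpa using hx'))
  have hzb' : r.append (P.dropUntil t ht) = hT.path z b :=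
    hT.eq_path <| hr.append (hP.dropUntil ht) fun x hx hx' =>
      hmeet x hx (P.support_dropUntil_subset_support ht hx')
  have hlen : (P.takeUntil t ht).length + (P.dropUntil t ht).length = P.length := by
    rw [← Walk.length_append, P.take_spec ht]
  have hr : r.length ≠ 0 := fun h => hz (Walk.eq_of_length_eq_zero h ▸ ht)
  have hloop {x : V} {q : T.Walk x x} (hq : q.IsPath) : q.length = 0 :=
    Walk.length_eq_zero_iff.mpr (Walk.isPath_iff_nil.mp hq)
  rw [← hza', Walk.length_append, Walk.length_reverse] at hza
  rw [← hzb', Walk.length_append] at hzb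
  refine ⟨t, fun hta => ?_, fun htb => ?_, fun htz => hz (htz ▸ ht), ht, ?_, ?_⟩
  · subst hta
    have := hloop (hP.takeUntil ht)
    omega
  · subst htb
    have := hloop (hP.dropUntil ht)
    omega
  · exact hza' ▸ r.support_subset_support_append_left _ r.end_mem_support
  · exact hzb' ▸ r.support_subset_support_append_left _ r.end_mem_support

variable [Fintype V]

/-- The vertex set of the branch of `G` at `v` containing `u`, i.e. of the component of `G - v`
containing `u` (empty when `u = v`). -/
noncomputable def branch (G : SimpleGraph V) (v u : V) : Finset V := {y | G.AvoidingReach v u y}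

@[simp]
lemma mem_branch {v u y : V} : y ∈ G.branch v u ↔ G.AvoidingReach v u y := by
  simp [branch]

lemma branch_self (v : V) : G.branch v v = ∅ :=
  eq_empty_of_forall_notMem fun _ hy => (mem_branch.mp hy).ne_left rfl

lemma branch_eq_of_avoidingReach {v u u' : V} (h : G.AvoidingReach v u u') :
    G.branch v u = G.branch v u' := by
  ext y
  simp only [mem_branch]
  exact ⟨h.symm.trans, h.trans⟩

lemma disjoint_branch {t x y : V} (h : ¬ G.AvoidingReach t x y) :
    Disjoint (G.branch t x) (G.branch t y) :=
  Finset.disjoint_left.mpr fun _ hx hy => h ((mem_branch.mp hx).trans (mem_branch.mp hy).symm)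

lemma IsTree.branch_union_branch (hT : T.IsTree) {t x : V} (hne : t ≠ x) :
    T.branch t x ∪ T.branch x t = univ :=
  eq_univ_of_forall fun y => by simpa using hT.avoidingReach_or hne y

lemma IsTree.compl_branch_of_adj (hT : T.IsTree) {a b : V} (h : T.Adj a b) :
    (T.branch a b)ᶜ = T.branch b a := by
  ext y
  simp [hT.avoidingReach_iff_of_adj h y]

lemma IsTree.branch_ssubset (hT : T.IsTree) {v u y : V} (hvu : v ≠ u)
    (hy : ¬ T.AvoidingReach u v y) : T.branch u y ⊂ T.branch v u := by
  refine ssubset_of_subset_of_ne (fun z hz => ?_) fun heq => ?_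
  · exact mem_branch.mpr (hT.avoidingReach_of_not_avoidingReach hvu hy (mem_branch.mp hz))
  · have hu : u ∈ T.branch u y := heq ▸ mem_branch.mpr (.refl hvu.symm)
    exact (mem_branch.mp hu).symm.ne_left rfl

/-- The vertex set of `T_c` for an endpoint `c` of a path `P`. -/
noncomputable def Walk.subtreeAt {a b : V} (P : G.Walk a b) (c : V) : Finset V :=
  {y | ∃ q : G.Walk c y, ∀ x ∈ q.support, x ∈ P.support → x = c}

lemma Walk.subtreeAt_subset_branch {a b c v u : V} {P : G.Walk a b} (hv : v ∈ P.support)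
    (hvc : v ≠ c) (h : G.AvoidingReach v u c) : P.subtreeAt c ⊆ G.branch v u := by
  intro y hy
  obtain ⟨q, hq⟩ := by simpa [subtreeAt] using hy
  exact mem_branch.mpr (h.trans ⟨q, fun hvq => hvc (hq v hvq hv)⟩)

lemma IsTree.branch_subset_subtreeAt (hT : T.IsTree) {a a' b : V} (h : T.Adj a a')
    {p : T.Walk a' b} (hP : (Walk.cons h p).IsPath) :
    T.branch a' a ⊆ (Walk.cons h p).subtreeAt a := by
  intro y hy
  obtain ⟨r, hr⟩ := mem_branch.mp hy
  have ha' : a' ∉ (hT.path a y).support := fun h' => hr (hT.mem_support_of_mem_path h' r)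
  rw [Walk.cons_isPath_iff] at hP
  simp only [Walk.subtreeAt, Finset.mem_filter, Finset.mem_univ, true_and]
  refine ⟨hT.path a y, fun x hx hxP => ?_⟩
  by_contra hxa
  have hxp : x ∈ p.support := by simpa [hxa] using hxP
  have h1 : T.AvoidingReach a a' x :=
    ⟨p.takeUntil x hxp, fun hm => hP.2 (p.support_takeUntil_subset_support hxp hm)⟩
  have h2 : T.AvoidingReach a' a x :=
    ⟨(hT.path a y).takeUntil x hx,
      fun hm => ha' ((hT.path a y).support_takeUntil_subset_support hx hm)⟩
  exact (hT.avoidingReach_iff_of_adj h x).mp h1 h2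

end SimpleGraph

section Centroid

variable {V : Type*} [Fintype V] {T : SimpleGraph V} {w : V → ℕ}

lemma compWeight_eq_sum_branch (v u : V) : compWeight T w v u = ∑ y ∈ T.branch v u, w y :=
  (sum_filter _ _).symm

lemma compWeight_mono {v u v' u' : V} (h : T.branch v u ⊆ T.branch v' u') :
    compWeight T w v u ≤ compWeight T w v' u' := by
  simpa only [compWeight_eq_sum_branch] using sum_le_sum_of_subset h

lemma compWeight_self (v : V) : compWeight T w v v = 0 := by
  simp [compWeight_eq_sum_branch, branch_self]

lemma compWeight_le_hs (v u : V) : compWeight T w v u ≤ hs T w v :=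
  le_sup (f := compWeight T w v) (mem_univ u)

lemma exists_compWeight_eq_hs [Nonempty V] (v : V) : ∃ u, compWeight T w v u = hs T w v := by
  obtain ⟨u, -, h⟩ := exists_mem_eq_sup univ univ_nonempty (compWeight T w v)
  exact ⟨u, h.symm⟩

lemma exists_adj_compWeight_eq_hs (hT : T.Preconnected) {v : V} (h : 0 < hs T w v) :
    ∃ a, T.Adj v a ∧ compWeight T w v a = hs T w v := by
  have : Nonempty V := ⟨v⟩
  obtain ⟨u, hu⟩ := exists_compWeight_eq_hs (T := T) (w := w) v
  have hvu : v ≠ u := by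
    rintro rfl
    rw [compWeight_self] at hu
    omega
  obtain ⟨a, hadj, ha⟩ := hT.exists_adj_avoidingReach hvu
  exact ⟨a, hadj, by rw [compWeight_eq_sum_branch, branch_eq_of_avoidingReach ha, ← hu,
    compWeight_eq_sum_branch]⟩

lemma compWeight_add_compWeight_of_adj (hT : T.IsTree) {a b : V} (h : T.Adj a b) :
    compWeight T w a b + compWeight T w b a = ∑ y, w y := by
  rw [compWeight_eq_sum_branch, compWeight_eq_sum_branch, ← hT.compl_branch_of_adj h,
    sum_add_sum_compl]

lemma sum_le_compWeight_add_compWeight (hT : T.IsTree) {t x : V} (hne : t ≠ x) :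
    ∑ y, w y ≤ compWeight T w t x + compWeight T w x t := by
  rw [compWeight_eq_sum_branch, compWeight_eq_sum_branch, ← sum_union_inter,
    hT.branch_union_branch hne]
  exact Nat.le_add_right _ _

lemma sum_le_hs_add_hs (hT : T.IsTree) {x y : V} (hne : x ≠ y) :
    ∑ v, w v ≤ hs T w x + hs T w y :=
  (sum_le_compWeight_add_compWeight hT hne).trans
    (add_le_add (compWeight_le_hs x y) (compWeight_le_hs y x))

lemma hs_le_max (hT : T.IsTree) {v u : V} (hvu : v ≠ u) :
    hs T w u ≤ max (compWeight T w u v) (compWeight T w v u) := by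
  refine Finset.sup_le fun y _ => ?_
  by_cases hy : T.AvoidingReach u v y
  · rw [compWeight_eq_sum_branch, ← branch_eq_of_avoidingReach hy, ← compWeight_eq_sum_branch]
    exact le_max_left _ _
  · exact (compWeight_mono (hT.branch_ssubset hvu hy).subset).trans (le_max_right _ _)

lemma sideWeight_eq_sum_subtreeAt {a b : V} (P : T.Walk a b) (c : V) :
    sideWeight T w P c = ∑ y ∈ P.subtreeAt c, w y :=
  (sum_filter _ _).symm

lemma sideWeight_reverse {a b : V} (P : T.Walk a b) (c : V) :
    sideWeight T w P.reverse c = sideWeight T w P c := by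
  simp only [sideWeight, Walk.support_reverse, List.mem_reverse]

lemma sum_le_sideWeight_add_hs (hT : T.IsTree) {a b : V} {P : T.Walk a b} (hP : P.IsPath)
    (hab : a ≠ b) : ∑ y, w y ≤ sideWeight T w P a + hs T w a := by
  obtain ⟨a', h, p, rfl⟩ := Walk.exists_eq_cons_of_ne hab P
  have hside : compWeight T w a' a ≤ sideWeight T w (.cons h p) a := by
    rw [compWeight_eq_sum_branch, sideWeight_eq_sum_subtreeAt]
    exact sum_le_sum_of_subset (hT.branch_subset_subtreeAt h hP)
  have := compWeight_add_compWeight_of_adj (w := w) hT h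
  have := compWeight_le_hs (T := T) (w := w) a a'
  omega

lemma sideWeight_add_sideWeight_le (hT : T.IsTree) {a b : V} {P : T.Walk a b} (hP : P.IsPath)
    (hab : a ≠ b) : sideWeight T w P a + sideWeight T w P b ≤ ∑ y, w y := by
  obtain ⟨a', h, p, rfl⟩ := Walk.exists_eq_cons_of_ne hab P
  rw [Walk.cons_isPath_iff] at hP
  have ha : (Walk.cons h p).subtreeAt a ⊆ T.branch a' a :=
    Walk.subtreeAt_subset_branch (by simp) h.ne' (.refl h.ne)
  have hb : (Walk.cons h p).subtreeAt b ⊆ T.branch a a' :=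
    Walk.subtreeAt_subset_branch (by simp) hab ⟨p, hP.2⟩
  calc sideWeight T w (.cons h p) a + sideWeight T w (.cons h p) b
      ≤ compWeight T w a' a + compWeight T w a a' := by
        simp only [sideWeight_eq_sum_subtreeAt, compWeight_eq_sum_branch]
        exact add_le_add (sum_le_sum_of_subset ha) (sum_le_sum_of_subset hb)
    _ = ∑ y, w y := by rw [add_comm, compWeight_add_compWeight_of_adj hT h]

/-- If every vertex had a branch of weight above `n/2`, take such a branch `T.branch v u` with
fewest vertices: at `u` the branch containing `v` is light, and every other branch at `u` is a
strictly smaller subset of `T.branch v u`. -/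
lemma exists_two_mul_hs_le (hT : T.IsTree) : ∃ v, 2 * hs T w v ≤ ∑ y, w y := by
  by_contra! hheavy
  have hadj (v : V) : ∃ a, T.Adj v a ∧ ∑ y, w y < 2 * compWeight T w v a := by
    obtain ⟨a, ha, hva⟩ := exists_adj_compWeight_eq_hs (w := w) hT.connected.preconnected
      (v := v) (by have := hheavy v; omega)
    exact ⟨a, ha, hva ▸ hheavy v⟩
  let heavy : Finset (V × V) :=
    {e | T.Adj e.1 e.2 ∧ ∑ y, w y < 2 * compWeight T w e.1 e.2}
  obtain ⟨v₀⟩ := hT.nonempty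
  obtain ⟨a₀, ha₀⟩ := hadj v₀
  obtain ⟨⟨v, u⟩, hvu, hmin⟩ := exists_min_image heavy (fun e => #(T.branch e.1 e.2))
    ⟨(v₀, a₀), by simpa [heavy] using ha₀⟩
  simp only [heavy, mem_filter, mem_univ, true_and] at hvu hmin
  obtain ⟨a, hua, hheavy_a⟩ := hadj u
  by_cases hav : a = v
  · subst hav
    have := compWeight_add_compWeight_of_adj (w := w) hT hvu.1
    omega
  · have hlt := card_lt_card <| hT.branch_ssubset hvu.1.ne
      (hT.not_avoidingReach_of_adj_of_adj hvu.1.symm hua (Ne.symm hav))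
    exact (hmin (u, a) ⟨hua, hheavy_a⟩).not_gt hlt

lemma exists_isCentroid [Nonempty V] (T : SimpleGraph V) (w : V → ℕ) :
    ∃ c, IsCentroid T w c := by
  obtain ⟨c, -, h⟩ := exists_min_image univ (hs T w) univ_nonempty
  exact ⟨c, fun u => h u (mem_univ u)⟩

lemma IsCentroid.hs_eq {c d : V} (hc : IsCentroid T w c) (hd : IsCentroid T w d) :
    hs T w c = hs T w d :=
  le_antisymm (hc d) (hd c)

lemma IsCentroid.two_mul_hs_le (hT : T.IsTree) {c : V} (hc : IsCentroid T w c) :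
    2 * hs T w c ≤ ∑ y, w y := by
  obtain ⟨v, hv⟩ := exists_two_mul_hs_le (w := w) hT
  have := hc v
  omega

lemma eq_of_two_mul_hs_lt (hT : T.IsTree) {x y : V} (hx : 2 * hs T w x < ∑ v, w v)
    (hy : 2 * hs T w y < ∑ v, w v) : x = y := by
  by_contra hne
  have := sum_le_hs_add_hs (w := w) hT hne
  omega

lemma IsCentroid.exists_adj_isCentroid (hT : T.IsTree) {c : V} (hc : IsCentroid T w c)
    (h : 2 * hs T w c = ∑ y, w y) (hpos : 0 < ∑ y, w y) :
    ∃ u, T.Adj c u ∧ IsCentroid T w u := by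
  obtain ⟨u, hadj, hu⟩ :=
    exists_adj_compWeight_eq_hs (w := w) hT.connected.preconnected (v := c) (by omega)
  have hsplit := compWeight_add_compWeight_of_adj (w := w) hT hadj
  have hmax := hs_le_max (w := w) hT hadj.ne
  refine ⟨u, hadj, fun x => le_trans ?_ (hc x)⟩
  have hback : compWeight T w u c = hs T w c := by omega
  rwa [hback, hu, max_self] at hmax

/-- `hs x ≥ compWeight T w x t ≥ n - compWeight T w t x`, and the branches at `t` containing
`x`, `y`, `z` are disjoint. -/
lemma two_mul_sum_le_hs_add_hs_add_hs (hT : T.IsTree) {t x y z : V} (hx : t ≠ x) (hy : t ≠ y)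
    (hz : t ≠ z) (hxy : ¬ T.AvoidingReach t x y) (hzx : ¬ T.AvoidingReach t z x)
    (hzy : ¬ T.AvoidingReach t z y) :
    2 * ∑ v, w v ≤ hs T w x + hs T w y + hs T w z := by
  have hdisj : compWeight T w t x + compWeight T w t y + compWeight T w t z ≤ ∑ v, w v := by
    simp only [compWeight_eq_sum_branch]
    rw [← sum_union (disjoint_branch hxy), ← sum_union (disjoint_union_left.mpr
      ⟨(disjoint_branch hzx).symm, (disjoint_branch hzy).symm⟩)]
    exact sum_le_sum_of_subset (subset_univ _)
  have := sum_le_compWeight_add_compWeight (w := w) hT hx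
  have := sum_le_compWeight_add_compWeight (w := w) hT hy
  have := sum_le_compWeight_add_compWeight (w := w) hT hz
  have := compWeight_le_hs (T := T) (w := w) x t
  have := compWeight_le_hs (T := T) (w := w) y t
  have := compWeight_le_hs (T := T) (w := w) z t
  omega

lemma exists_farthest_isCentroid_pair_ne (hT : T.IsTree) (hpos : 0 < ∑ y, w y) {c : V}
    (hc : IsCentroid T w c) (h : 2 * hs T w c = ∑ y, w y) :
    ∃ c1 c2, IsCentroid T w c1 ∧ IsCentroid T w c2 ∧ c1 ≠ c2 ∧
      ∀ x y, IsCentroid T w x → IsCentroid T w y →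
        (hT.path x y).length ≤ (hT.path c1 c2).length := by
  obtain ⟨⟨c1, c2⟩, hmem, hmax⟩ :=
    exists_max_image {e : V × V | IsCentroid T w e.1 ∧ IsCentroid T w e.2}
      (fun e => (hT.path e.1 e.2).length) ⟨(c, c), by simp [hc]⟩
  simp only [mem_filter, mem_univ, true_and, Prod.forall] at hmem hmax
  refine ⟨c1, c2, hmem.1, hmem.2, fun heq => ?_, fun x y hx hy => hmax x y ⟨hx, hy⟩⟩
  obtain ⟨u, hadj, hu⟩ := hc.exists_adj_isCentroid hT h hpos
  have hcu := hmax c u ⟨hc, hu⟩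
  rw [← hT.eq_path (Walk.IsPath.nil.cons (by simpa using hadj.ne) : (Walk.cons hadj .nil).IsPath),
    heq, ← hT.eq_path Walk.IsPath.nil] at hcu
  simp at hcu

lemma IsCentroid.mem_support_path {z : V} (hz : IsCentroid T w z) (hT : T.IsTree)
    (hpos : 0 < ∑ y, w y) {c1 c2 : V} (hc1 : IsCentroid T w c1) (hc2 : IsCentroid T w c2)
    (hhalf : 2 * hs T w c1 = ∑ y, w y)
    (hmax : ∀ x y, IsCentroid T w x → IsCentroid T w y →
      (hT.path x y).length ≤ (hT.path c1 c2).length) :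
    z ∈ (hT.path c1 c2).support := by
  by_contra hzP
  obtain ⟨t, ht1, ht2, htz, ht12, htz1, htz2⟩ := hT.exists_mem_path_ne_of_length_le
    (hT.isPath_path c1 c2) hzP (hmax z c1 hz hc1) (hmax z c2 hz hc2)
  have := two_mul_sum_le_hs_add_hs_add_hs (w := w) hT ht1 ht2 htz
    (hT.not_avoidingReach_of_mem_path ht12) (hT.not_avoidingReach_of_mem_path htz1)
    (hT.not_avoidingReach_of_mem_path htz2)
  have := hc1.hs_eq hc2
  have := hc1.hs_eq hz
  omega

end Centroid

/-- All centroids of a weighted tree of total weight n > 0 lie on a path P with endpoints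
c1, c2 such that w(T_P) = 0 (encoded: the two end-subtrees carry all the weight).
If c1 ≠ c2 then hs(c1) = hs(c2) = w(T_{c1}) = w(T_{c2}) = n/2;
if the path is trivial (c1 = c2 = c) then hs(c) < n/2. -/
theorem stmt_4 {V : Type*} [Fintype V] (T : SimpleGraph V) (w : V → ℕ) (hT : T.IsTree)
    (hw : 0 < ∑ v, w v) :
    ∃ (c1 c2 : V) (p : T.Walk c1 c2), p.IsPath ∧
      IsCentroid T w c1 ∧ IsCentroid T w c2 ∧
      (∀ v, IsCentroid T w v → v ∈ p.support) ∧
      (c1 ≠ c2 →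
        sideWeight T w p c1 + sideWeight T w p c2 = ∑ v, w v ∧
        2 * hs T w c1 = ∑ v, w v ∧ 2 * hs T w c2 = ∑ v, w v ∧
        2 * sideWeight T w p c1 = ∑ v, w v ∧ 2 * sideWeight T w p c2 = ∑ v, w v) ∧
      (c1 = c2 → 2 * hs T w c1 < ∑ v, w v) := by
  have : Nonempty V := hT.nonempty
  obtain ⟨c, hc⟩ := exists_isCentroid T w
  rcases (hc.two_mul_hs_le hT).lt_or_eq with hlt | heq
  · refine ⟨c, c, .nil, .nil, hc, hc, fun v hv => ?_, fun h => (h rfl).elim, fun _ => hlt⟩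
    have hv' : 2 * hs T w v < ∑ v, w v := by rwa [hv.hs_eq hc]
    rw [eq_of_two_mul_hs_lt hT hv' hlt]
    exact Walk.start_mem_support _
  obtain ⟨c1, c2, hc1, hc2, hne, hmax⟩ := exists_farthest_isCentroid_pair_ne hT hw hc heq
  have h1 : 2 * hs T w c1 = ∑ v, w v := hc1.hs_eq hc ▸ heq
  have h2 : 2 * hs T w c2 = ∑ v, w v := hc2.hs_eq hc ▸ heq
  have hP := hT.isPath_path c1 c2
  have hside1 := sum_le_sideWeight_add_hs (w := w) hT hP hne
  have hside2 := sum_le_sideWeight_add_hs (w := w) hT hP.reverse hne.symm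
  have hsides := sideWeight_add_sideWeight_le (w := w) hT hP hne
  rw [sideWeight_reverse] at hside2
  exact ⟨c1, c2, hT.path c1 c2, hP, hc1, hc2,
    fun z hz => hz.mem_support_path hT hw hc1 hc2 h1 hmax,
    fun _ => ⟨by omega, h1, h2, by omega, by omega⟩, fun h => (hne h).elim⟩
end

section
/- The map sending a connected block graph on n vertices to its weighted block tree is a bijection (up to isomorphism) between connected block graphs on n vertices and weighted block trees of total weight n. -/
open SimpleGraph
open scoped Classical

/-- v is a cut vertex: its removal disconnects two vertices that were connected. -/
def IsCutVertex {V : Type*} (G : SimpleGraph V) (v : V) : Prop :=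
  ∃ a b : ({u : V | u ≠ v} : Set V),
    G.Reachable a.1 b.1 ∧ ¬ (G.induce {u : V | u ≠ v}).Reachable a b

/-- B is a nonempty biconnected set: the induced subgraph is connected and remains
connected (in the sense of pairwise reachability) after removing any one vertex. -/
def IsBiconn {V : Type*} (G : SimpleGraph V) (B : Set V) : Prop :=
  B.Nonempty ∧ (∀ x y : B, (G.induce B).Reachable x y) ∧
  ∀ b ∈ B, ∀ x y : ↥(B \ {b}), (G.induce (B \ {b})).Reachable x y

/-- A block is a maximal biconnected set of vertices. -/
def IsBlock {V : Type*} (G : SimpleGraph V) (B : Set V) : Prop :=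
  IsBiconn G B ∧ ∀ B', B ⊆ B' → IsBiconn G B' → B = B'

/-- Vertex set of the block tree of G: cut vertices and blocks. -/
def BTVert {V : Type*} (G : SimpleGraph V) : Type _ :=
  {v : V // IsCutVertex G v} ⊕ {B : Set V // IsBlock G B}

/-- The block tree of G: a cut vertex v is adjacent to a block B iff v ∈ B. -/
def blockTree {V : Type*} (G : SimpleGraph V) : SimpleGraph (BTVert G) where
  Adj x y :=
    (∃ v B, x = Sum.inl v ∧ y = Sum.inr B ∧ v.1 ∈ B.1) ∨
    (∃ v B, x = Sum.inr B ∧ y = Sum.inl v ∧ v.1 ∈ B.1)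
  symm := by
    constructor
    rintro x y (⟨v, B, rfl, rfl, h⟩ | ⟨v, B, rfl, rfl, h⟩)
    · exact Or.inr ⟨v, B, rfl, rfl, h⟩
    · exact Or.inl ⟨v, B, rfl, rfl, h⟩
  loopless := by
    constructor
    rintro x (⟨v, B, rfl, h, -⟩ | ⟨v, B, rfl, h, -⟩) <;> simp at h

/-- The weight function of the weighted block tree: cut vertices weigh 1 and a block
weighs its number of non-cut vertices. -/
noncomputable def btWeight {V : Type*} (G : SimpleGraph V) : BTVert G → ℕ :=
  Sum.elim (fun _ => 1) (fun B => (B.1 \ {v | IsCutVertex G v}).ncard)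

/-- A leaf is a vertex with exactly one neighbor. -/
def IsLeaf {V : Type*} (T : SimpleGraph V) (v : V) : Prop :=
  (T.neighborSet v).ncard = 1
/-- A block graph: every block is a clique. -/
def IsBlockGraph {V : Type*} (G : SimpleGraph V) : Prop :=
  ∀ B : Set V, IsBlock G B → ∀ u ∈ B, ∀ v ∈ B, u ≠ v → G.Adj u v

/-- Isomorphism of weighted block trees. -/
def BTIso {V V' : Type*} (G : SimpleGraph V) (G' : SimpleGraph V') : Prop :=
  ∃ e : BTVert G ≃ BTVert G',
    (∀ x y, (blockTree G).Adj x y ↔ (blockTree G').Adj (e x) (e y)) ∧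
    ∀ x, btWeight G' (e x) = btWeight G x

/-!
Surjectivity: completing every block of a connected graph `H` to a clique gives a block graph
`blockClosure H` with the same blocks and cut vertices. Both are determined by which pairs of
vertices can be separated by removing a single vertex, and an edge added inside a block can be
replaced by a path inside that block avoiding any given vertex.

Injectivity: the block tree is a tree, and its leaves are blocks because a cut vertex lies in
two blocks; hence an isomorphism of block trees maps cut vertices to cut vertices and blocks to
blocks. Matching the non-cut vertices block by block, which the weights allow, gives a bijection
of vertices preserving membership in blocks, and in a block graph two vertices are adjacent
exactly when they are distinct and share a block.
-/

namespace SimpleGraph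

variable {V : Type*} {G : SimpleGraph V}

def ReachableIn (G : SimpleGraph V) (S : Set V) (a b : V) : Prop :=
  ∃ p : G.Walk a b, ∀ x ∈ p.support, x ∈ S

namespace ReachableIn

variable {S T : Set V} {a b c : V}

lemma mono (h : S ⊆ T) (hab : G.ReachableIn S a b) : G.ReachableIn T a b :=
  let ⟨p, hp⟩ := hab; ⟨p, fun x hx => h (hp x hx)⟩

lemma refl (ha : a ∈ S) : G.ReachableIn S a a :=
  ⟨.nil, by simpa using ha⟩

lemma symm (h : G.ReachableIn S a b) : G.ReachableIn S b a :=
  let ⟨p, hp⟩ := h; ⟨p.reverse, fun x hx => hp x (by simpa using hx)⟩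

lemma trans (hab : G.ReachableIn S a b) (hbc : G.ReachableIn S b c) : G.ReachableIn S a c := by
  obtain ⟨p, hp⟩ := hab
  obtain ⟨q, hq⟩ := hbc
  refine ⟨p.append q, fun x hx => ?_⟩
  rcases (Walk.mem_support_append_iff _ _).1 hx with hx | hx
  exacts [hp x hx, hq x hx]

lemma left_mem (h : G.ReachableIn S a b) : a ∈ S :=
  let ⟨p, hp⟩ := h; hp a p.start_mem_support

lemma right_mem (h : G.ReachableIn S a b) : b ∈ S :=
  h.symm.left_mem

lemma of_adj (h : G.Adj a b) (ha : a ∈ S) (hb : b ∈ S) : G.ReachableIn S a b :=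
  ⟨h.toWalk, by simp [ha, hb]⟩

lemma reachable (h : G.ReachableIn S a b) : G.Reachable a b :=
  let ⟨p, _⟩ := h; ⟨p⟩

lemma exists_isPath (h : G.ReachableIn S a b) :
    ∃ p : G.Walk a b, p.IsPath ∧ ∀ x ∈ p.support, x ∈ S := by
  obtain ⟨p, hp⟩ := h
  exact ⟨p.bypass, p.bypass_isPath, fun x hx => hp x (p.support_bypass_subset_support hx)⟩

lemma mono_graph {G' : SimpleGraph V} (hG : G ≤ G') {S : Set V} {a b : V}
    (h : G.ReachableIn S a b) : G'.ReachableIn S a b :=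
  let ⟨p, hp⟩ := h; ⟨p.mapLe hG, by simpa using hp⟩

end ReachableIn

lemma reachableIn_iff_reachable_induce {S : Set V} (a b : S) :
    G.ReachableIn S a b ↔ (G.induce S).Reachable a b := by
  constructor
  · rintro ⟨p, hp⟩
    exact ⟨(p.induce S hp).copy rfl rfl⟩
  · rintro ⟨p⟩
    induction p with
    | nil => exact .refl (Subtype.mem _)
    | cons h _ ih => exact (ReachableIn.of_adj (G := G) h (Subtype.mem _) (Subtype.mem _)).trans ih

lemma reachableIn_univ_iff {a b : V} : G.ReachableIn Set.univ a b ↔ G.Reachable a b :=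
  ⟨ReachableIn.reachable, fun ⟨p⟩ => ⟨p, fun _ _ => trivial⟩⟩

lemma Walk.IsPath.exists_reachableIn_avoiding {a b z : V} {p : G.Walk a b} (hp : p.IsPath)
    (hz : z ∈ p.support) {R : Set V} (hR : R.Subsingleton) (hzR : z ∉ R) :
    G.ReachableIn ({x | x ∈ p.support} \ R) z a ∨
      G.ReachableIn ({x | x ∈ p.support} \ R) z b := by
  by_cases hR' : ∃ w ∈ R, w ∈ (p.takeUntil z hz).support
  · obtain ⟨w, hwR, hw⟩ := hR'
    refine .inr ⟨p.dropUntil z hz, fun x hx => ⟨p.support_dropUntil_subset_support hz hx, ?_⟩⟩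
    rintro hxR
    obtain rfl : x = w := hR hxR hwR
    have hxz : x ≠ z := fun h => hzR (h ▸ hxR)
    have hnd := hp.support_nodup
    rw [← p.take_spec hz, Walk.support_append] at hnd
    rw [← Walk.cons_tail_support, List.mem_cons] at hx
    exact List.disjoint_of_nodup_append hnd hw (hx.resolve_left hxz)
  · push Not at hR'
    refine .inl ⟨(p.takeUntil z hz).reverse, fun x hx => ?_⟩
    rw [Walk.support_reverse, List.mem_reverse] at hx
    exact ⟨p.support_takeUntil_subset_support hz hx, fun hxR => hR' x hxR hx⟩

lemma Walk.IsPath.reachableIn_compl_snd {u w : V} {p : G.Walk u w} (hp : p.IsPath)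
    (hne : ¬ p.Nil) : G.ReachableIn {u}ᶜ p.snd w := by
  rw [← p.cons_tail_eq hne, Walk.cons_isPath_iff] at hp
  exact ⟨p.tail, fun z hz hzu => hp.2 (hzu ▸ hz)⟩

lemma IsTree.exists_subsingleton_neighborSet [Finite V] (hG : G.IsTree) :
    ∃ x, (G.neighborSet x).Subsingleton := by
  rcases subsingleton_or_nontrivial V with hV | hV
  · exact ⟨hG.connected.nonempty.some, Set.subsingleton_of_subsingleton⟩
  have := Fintype.ofFinite V
  obtain ⟨x, hx⟩ := hG.exists_vert_degree_one_of_nontrivial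
  obtain ⟨y, -, hy⟩ := degree_eq_one_iff_existsUnique_adj.1 hx
  exact ⟨x, fun a ha b hb => (hy a ha).trans (hy b hb).symm⟩

def ShareBlock (G : SimpleGraph V) (u v : V) : Prop := ∃ B, IsBlock G B ∧ u ∈ B ∧ v ∈ B

lemma ShareBlock.symm {u v : V} (h : G.ShareBlock u v) : G.ShareBlock v u :=
  let ⟨B, hB, hu, hv⟩ := h; ⟨B, hB, hv, hu⟩

end SimpleGraph

lemma Equiv.exists_comp_eq_of_card_fiber {α β γ δ : Type*} [Finite α] [Finite β]
    (π : α → γ) (π' : β → δ) (e : γ ≃ δ)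
    (hcard : ∀ z, Nat.card {x // π x = z} = Nat.card {y // π' y = e z}) :
    ∃ E : α ≃ β, ∀ x, π' (E x) = e (π x) := by
  have f := fun z => (Finite.card_eq.1 (hcard z)).some
  exact ⟨(Equiv.sigmaFiberEquiv π).symm.trans
    ((Equiv.sigmaCongr e f).trans (Equiv.sigmaFiberEquiv π')), fun x => (f (π x) ⟨x, rfl⟩).2⟩

lemma Equiv.exists_map_inr_of_isLeft {α β γ δ : Type*} (e : α ⊕ β ≃ γ ⊕ δ)
    (he : ∀ x, (e x).isLeft = x.isLeft) : ∃ g : β ≃ δ, ∀ b, e (.inr b) = .inr (g b) := by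
  refine ⟨Equiv.sumIsRight.symm.trans ((e.subtypeEquiv fun x => ?_).trans Equiv.sumIsRight),
    fun b => ?_⟩
  · simp only [← Sum.not_isLeft, he]
  · simp

section Blocks

variable {V : Type*} {G : SimpleGraph V} {S B B' : Set V}

lemma isBiconn_iff_reachableIn : IsBiconn G S ↔ S.Nonempty ∧
    ∀ R : Set V, R.Subsingleton → ∀ x ∈ S \ R, ∀ y ∈ S \ R, G.ReachableIn (S \ R) x y := by
  refine ⟨fun ⟨hne, hconn, hrem⟩ => ⟨hne, fun R hR x hx y hy => ?_⟩, fun ⟨hne, h⟩ => ⟨hne, ?_, ?_⟩⟩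
  · rcases hR.eq_empty_or_singleton with rfl | ⟨b, rfl⟩
    · simp only [Set.sdiff_empty] at hx hy ⊢
      exact (reachableIn_iff_reachable_induce ⟨x, hx⟩ ⟨y, hy⟩).2 (hconn _ _)
    by_cases hb : b ∈ S
    · exact (reachableIn_iff_reachable_induce ⟨x, hx⟩ ⟨y, hy⟩).2 (hrem b hb _ _)
    · rw [Set.sdiff_singleton_eq_self hb] at hx hy ⊢
      exact (reachableIn_iff_reachable_induce ⟨x, hx⟩ ⟨y, hy⟩).2 (hconn _ _)
  · intro x y
    have := h ∅ Set.subsingleton_empty x (by simp) y (by simp)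
    rw [Set.sdiff_empty] at this
    exact (reachableIn_iff_reachable_induce x y).1 this
  · intro b _ x y
    exact (reachableIn_iff_reachable_induce x y).1
      (h {b} Set.subsingleton_singleton x x.2 y y.2)

lemma isBiconn_singleton (v : V) : IsBiconn G {v} :=
  isBiconn_iff_reachableIn.2 ⟨⟨v, rfl⟩, fun _ _ x hx y hy => by
    obtain rfl : x = v := hx.1
    obtain rfl : y = x := hy.1
    exact .refl hx⟩

lemma isBiconn_pair {u v : V} (h : G.Adj u v) : IsBiconn G {u, v} := by
  refine isBiconn_iff_reachableIn.2 ⟨⟨u, by simp⟩, fun R _ x hx y hy => ?_⟩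
  by_cases hxy : x = y
  · exact hxy ▸ .refl hx
  have hadj : G.Adj x y := by
    rcases hx.1 with rfl | rfl <;> rcases hy.1 with rfl | rfl
    exacts [absurd rfl hxy, h, h.symm, absurd rfl hxy]
  exact .of_adj hadj hx hy

lemma IsBlock.reachableIn (hB : IsBlock G B) {R : Set V} (hR : R.Subsingleton) {x y : V}
    (hx : x ∈ B \ R) (hy : y ∈ B \ R) : G.ReachableIn (B \ R) x y :=
  (isBiconn_iff_reachableIn.1 hB.1).2 R hR x hx y hy

lemma IsBlock.reachableIn_of_chain (C : ℕ → Set V) (u : ℕ → V) {n : ℕ} {R : Set V}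
    (hR : R.Subsingleton) (hC : ∀ k ≤ n, IsBlock G (C k))
    (hlink : ∀ k < n, u k ∈ C k ∧ u k ∈ C (k + 1) ∧ u k ∉ R) (hS : ∀ k ≤ n, C k ⊆ S)
    {k l : ℕ} (hk : k ≤ n) (hl : l ≤ n) {x y : V} (hx : x ∈ C k \ R) (hy : y ∈ C l \ R) :
    G.ReachableIn (S \ R) x y := by
  have hdiff : ∀ k ≤ n, C k \ R ⊆ S \ R := fun k hk => Set.sdiff_subset_sdiff_left (hS k hk)
  have hbase : ∀ k ≤ n, ∀ x ∈ C k \ R, ∃ x₀ ∈ C 0 \ R, G.ReachableIn (S \ R) x x₀ := by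
    intro k
    induction k with
    | zero => exact fun _ x hx => ⟨x, hx, .refl (hdiff 0 (Nat.zero_le n) hx)⟩
    | succ k ih =>
      intro hk x hx
      obtain ⟨huk, huk', hukR⟩ := hlink k hk
      obtain ⟨x₀, hx₀, hux₀⟩ := ih (by omega) (u k) ⟨huk, hukR⟩
      exact ⟨x₀, hx₀, (((hC _ hk).reachableIn hR hx ⟨huk', hukR⟩).mono (hdiff _ hk)).trans hux₀⟩
  obtain ⟨x₀, hx₀, hxx₀⟩ := hbase k hk x hx
  obtain ⟨y₀, hy₀, hyy₀⟩ := hbase l hl y hy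
  exact (hxx₀.trans (((hC 0 (Nat.zero_le _)).reachableIn hR hx₀ hy₀).mono
    (hdiff 0 (Nat.zero_le _)))).trans hyy₀.symm

/-- The union of the blocks is biconnected: removing one vertex breaks the cyclic chain at no
more than one link. -/
lemma IsBlock.eq_of_cyclic_chain {m : ℕ} [NeZero m] (C : ZMod m → Set V) (u : ZMod m → V)
    (hC : ∀ i, IsBlock G (C i)) (hu : Function.Injective u)
    (hlink : ∀ i, u i ∈ C i ∧ u i ∈ C (i + 1)) (i j : ZMod m) : C i = C j := by
  set U := ⋃ i, C i
  suffices hU : IsBiconn G U by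
    rw [(hC i).2 U (Set.subset_iUnion C i) hU, (hC j).2 U (Set.subset_iUnion C j) hU]
  refine isBiconn_iff_reachableIn.2 ⟨⟨u 0, Set.mem_iUnion.2 ⟨0, (hlink 0).1⟩⟩,
    fun R hR x hx y hy => ?_⟩
  -- start the chain right after the link lying in `R`, if there is one
  obtain ⟨i₀, hi₀⟩ : ∃ i₀ : ZMod m, ∀ k : ℕ, k + 1 < m → u (i₀ + k) ∉ R := by
    by_cases h : ∃ i, u i ∈ R
    · obtain ⟨i, hi⟩ := h
      refine ⟨i + 1, fun k hk hkR => ?_⟩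
      have hcast : ((k + 1 : ℕ) : ZMod m) = 0 := by
        push_cast; linear_combination hu (hR hkR hi)
      rw [ZMod.natCast_eq_zero_iff] at hcast
      exact absurd (Nat.le_of_dvd (Nat.succ_pos k) hcast) (by omega)
    · push Not at h
      exact ⟨0, fun k _ => h _⟩
  have hm : 0 < m := Nat.pos_of_neZero m
  have hmem : ∀ z ∈ U, ∃ k < m, z ∈ C (i₀ + k) := fun z hz => by
    obtain ⟨j, hj⟩ := Set.mem_iUnion.1 hz
    exact ⟨(j - i₀).val, ZMod.val_lt _, by simpa using hj⟩
  obtain ⟨k, hk, hxk⟩ := hmem x hx.1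
  obtain ⟨l, hl, hyl⟩ := hmem y hy.1
  refine reachableIn_of_chain (n := m - 1) (fun k => C (i₀ + k)) (fun k => u (i₀ + k)) hR
    (fun _ _ => hC _) (fun k hk => ⟨(hlink _).1, ?_, hi₀ k (by omega)⟩)
    (fun _ _ => Set.subset_iUnion C _) (by omega : k ≤ m - 1) (by omega : l ≤ m - 1)
    ⟨hxk, hx.2⟩ ⟨hyl, hy.2⟩
  simpa [add_assoc] using (hlink (i₀ + k)).2

lemma IsBlock.eq_of_mem_inter (hB : IsBlock G B) (hB' : IsBlock G B') {x y : V} (hxy : x ≠ y)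
    (hx : x ∈ B ∩ B') (hy : y ∈ B ∩ B') : B = B' := by
  refine IsBlock.eq_of_cyclic_chain (G := G) (m := 2) ![B, B'] ![x, y] ?_ ?_ ?_ 0 1
  · intro i; fin_cases i <;> assumption
  · intro i j h; fin_cases i <;> fin_cases j <;> first | rfl | simp_all
  · intro i; fin_cases i
    exacts [hx, ⟨hy.2, hy.1⟩]

lemma IsBlock.eq_of_triangle {B₁ B₂ B₃ : Set V} (hB₁ : IsBlock G B₁) (hB₂ : IsBlock G B₂)
    (hB₃ : IsBlock G B₃) {a b c : V} (hab : a ≠ b) (hbc : b ≠ c) (hca : c ≠ a)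
    (ha : a ∈ B₁ ∩ B₂) (hb : b ∈ B₂ ∩ B₃) (hc : c ∈ B₃ ∩ B₁) : B₁ = B₂ := by
  refine IsBlock.eq_of_cyclic_chain (G := G) (m := 3) ![B₁, B₂, B₃] ![a, b, c] ?_ ?_ ?_ 0 1
  · intro i; fin_cases i <;> assumption
  · intro i j h; fin_cases i <;> fin_cases j <;> first | rfl | simp_all [eq_comm]
  · intro i; fin_cases i
    exacts [ha, hb, hc]

lemma isBiconn_iUnion_support {ι : Type*} [Nonempty ι] {u v : V} (p : ι → G.Walk u v)
    (hp : ∀ i, (p i).IsPath) (havoid : ∀ w, w ≠ u → w ≠ v → ∃ i, w ∉ (p i).support) :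
    IsBiconn G (⋃ i, {x | x ∈ (p i).support}) := by
  set S := ⋃ i, {x | x ∈ (p i).support}
  have hsub : ∀ i, {x | x ∈ (p i).support} ⊆ S := fun i =>
    Set.subset_iUnion (fun i => {x | x ∈ (p i).support}) i
  refine isBiconn_iff_reachableIn.2 ⟨⟨u, Set.mem_iUnion.2 ⟨Classical.arbitrary ι,
    (p _).start_mem_support⟩⟩, fun R hR x hx y hy => ?_⟩
  have hends : ∀ z ∈ S \ R, ∃ e ∈ ({u, v} : Set V), G.ReachableIn (S \ R) z e := by
    rintro z ⟨hz, hzR⟩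
    obtain ⟨i, hi⟩ := Set.mem_iUnion.1 hz
    rcases (hp i).exists_reachableIn_avoiding hi hR hzR with h | h
    exacts [⟨u, by simp, h.mono (Set.sdiff_subset_sdiff_left (hsub i))⟩,
      ⟨v, by simp, h.mono (Set.sdiff_subset_sdiff_left (hsub i))⟩]
  have huv : u ∉ R → v ∉ R → G.ReachableIn (S \ R) u v := by
    intro huR hvR
    obtain ⟨i, hi⟩ : ∃ i, ∀ w ∈ R, w ∉ (p i).support := by
      rcases hR.eq_empty_or_singleton with rfl | ⟨w, rfl⟩
      · exact ⟨Classical.arbitrary ι, by simp⟩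
      · obtain ⟨i, hi⟩ := havoid w (fun h => huR (h ▸ rfl)) (fun h => hvR (h ▸ rfl))
        exact ⟨i, by simpa using hi⟩
    exact ⟨p i, fun z hz => ⟨hsub i hz, fun hzR => hi z hzR hz⟩⟩
  obtain ⟨e, he, hxe⟩ := hends x hx
  obtain ⟨f, hf, hyf⟩ := hends y hy
  have heR := hxe.right_mem.2
  have hfR := hyf.right_mem.2
  refine hxe.trans (ReachableIn.trans ?_ hyf.symm)
  rcases he with rfl | rfl <;> rcases hf with rfl | rfl
  exacts [.refl hxe.right_mem, huv heR hfR, (huv hfR heR).symm, .refl hxe.right_mem]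

lemma isCutVertex_iff_reachableIn {v : V} : IsCutVertex G v ↔
    ∃ a b, a ≠ v ∧ b ≠ v ∧ G.Reachable a b ∧ ¬ G.ReachableIn {v}ᶜ a b := by
  constructor
  · rintro ⟨a, b, hr, hnr⟩
    exact ⟨a, b, a.2, b.2, hr, mt (reachableIn_iff_reachable_induce a b).1 hnr⟩
  · rintro ⟨a, b, ha, hb, hr, hnr⟩
    exact ⟨⟨a, ha⟩, ⟨b, hb⟩, hr,
      mt (reachableIn_iff_reachable_induce (S := {v}ᶜ) ⟨a, ha⟩ ⟨b, hb⟩).2 hnr⟩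

variable [Finite V]

lemma IsBiconn.exists_isBlock_superset (hS : IsBiconn G S) : ∃ B, S ⊆ B ∧ IsBlock G B := by
  obtain ⟨B, hSB, hmax⟩ := (Set.toFinite {T | IsBiconn G T}).exists_le_maximal hS
  exact ⟨B, hSB, hmax.prop, fun B' hBB' hB' => hBB'.antisymm (hmax.2 hB' hBB')⟩

lemma exists_isBlock_mem (G : SimpleGraph V) (v : V) : ∃ B, IsBlock G B ∧ v ∈ B :=
  let ⟨B, hvB, hB⟩ := (isBiconn_singleton (G := G) v).exists_isBlock_superset
  ⟨B, hB, hvB rfl⟩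

lemma exists_isBlock_of_adj {u v : V} (h : G.Adj u v) : ∃ B, IsBlock G B ∧ u ∈ B ∧ v ∈ B :=
  let ⟨B, huvB, hB⟩ := (isBiconn_pair h).exists_isBlock_superset
  ⟨B, hB, huvB (by simp), huvB (by simp)⟩

lemma SimpleGraph.ShareBlock.refl (v : V) : G.ShareBlock v v :=
  let ⟨B, hB, hv⟩ := exists_isBlock_mem G v; ⟨B, hB, hv, hv⟩

lemma SimpleGraph.ShareBlock.of_adj {u v : V} (h : G.Adj u v) : G.ShareBlock u v :=
  exists_isBlock_of_adj h

lemma exists_isBlock_superset_of_pairwise_shareBlock {P : Set V} (hP : P.Nonempty)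
    (hshare : ∀ x ∈ P, ∀ y ∈ P, G.ShareBlock x y) : ∃ D, IsBlock G D ∧ P ⊆ D := by
  rcases hP.exists_eq_singleton_or_nontrivial with ⟨v, rfl⟩ | ⟨u, hu, v, hv, huv⟩
  · obtain ⟨D, hD, hvD⟩ := exists_isBlock_mem G v
    exact ⟨D, hD, Set.singleton_subset_iff.2 hvD⟩
  obtain ⟨D, hD, huD, hvD⟩ := hshare u hu v hv
  refine ⟨D, hD, fun x hx => ?_⟩
  by_cases hxu : x = u
  · exact hxu ▸ huD
  by_cases hxv : x = v
  · exact hxv ▸ hvD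
  obtain ⟨D₁, hD₁, hxD₁, huD₁⟩ := hshare x hx u hu
  obtain ⟨D₂, hD₂, hxD₂, hvD₂⟩ := hshare x hx v hv
  have : D = D₂ := hD.eq_of_triangle hD₂ hD₁ (Ne.symm hxv) hxu huv ⟨hvD, hvD₂⟩ ⟨hxD₂, hxD₁⟩
    ⟨huD₁, huD⟩
  exact this ▸ hxD₂

lemma isBlock_iff_shareBlock {B : Set V} : IsBlock G B ↔ B.Nonempty ∧
    (∀ u ∈ B, ∀ v ∈ B, G.ShareBlock u v) ∧ ∀ x, (∀ u ∈ B, G.ShareBlock x u) → x ∈ B := by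
  constructor
  · refine fun hB => ⟨hB.1.1, fun u hu v hv => ⟨B, hB, hu, hv⟩, fun x hx => ?_⟩
    have hpair : ∀ a ∈ insert x B, ∀ b ∈ insert x B, G.ShareBlock a b := by
      rintro a (rfl | ha) b (rfl | hb)
      exacts [.refl _, hx b hb, (hx a ha).symm, ⟨B, hB, ha, hb⟩]
    obtain ⟨D, hD, hxBD⟩ :=
      exists_isBlock_superset_of_pairwise_shareBlock (Set.insert_nonempty x B) hpair
    rw [hB.2 D ((Set.subset_insert x B).trans hxBD) hD.1]
    exact hxBD (Set.mem_insert x B)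
  · rintro ⟨hne, hshare, hclosed⟩
    obtain ⟨D, hD, hBD⟩ := exists_isBlock_superset_of_pairwise_shareBlock hne hshare
    have hDB : D ⊆ B := fun z hz => hclosed z fun u hu => ⟨D, hD, hz, hBD hu⟩
    exact hBD.antisymm hDB ▸ hD

lemma shareBlock_iff_forall_reachableIn {u v : V} (hr : G.Reachable u v)
    (huv : u ≠ v) : G.ShareBlock u v ↔ ∀ w, w ≠ u → w ≠ v → G.ReachableIn {w}ᶜ u v := by
  constructor
  · rintro ⟨B, hB, hu, hv⟩ w hwu hwv
    exact (hB.reachableIn Set.subsingleton_singleton ⟨hu, hwu.symm⟩ ⟨hv, hwv.symm⟩).mono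
      fun z hz => hz.2
  intro h
  by_cases hadj : G.Adj u v
  · exact .of_adj hadj
  have : Nonempty {w // w ≠ u ∧ w ≠ v} := by
    obtain ⟨q⟩ := hr
    have hq : ¬ q.Nil := Walk.not_nil_of_ne huv
    refine ⟨q.snd, (q.adj_snd hq).ne', fun h => hadj (h ▸ q.adj_snd hq)⟩
  choose p hp hpR using fun w : {w // w ≠ u ∧ w ≠ v} => (h w.1 w.2.1 w.2.2).exists_isPath
  obtain ⟨B, hsub, hB⟩ := (isBiconn_iUnion_support p hp fun w hwu hwv =>
    ⟨⟨w, hwu, hwv⟩, fun hw => hpR _ w hw rfl⟩).exists_isBlock_superset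
  exact ⟨B, hB, hsub (Set.mem_iUnion.2 ⟨Classical.arbitrary _, (p _).start_mem_support⟩),
    hsub (Set.mem_iUnion.2 ⟨Classical.arbitrary _, (p _).end_mem_support⟩)⟩

lemma IsBlock.isCutVertex_of_mem_inter (hconn : G.Connected) (hB : IsBlock G B)
    (hB' : IsBlock G B') (hne : B ≠ B') {v : V} (hv : v ∈ B ∩ B') : IsCutVertex G v := by
  by_contra hcut
  have havoid : ∀ a b, a ≠ v → b ≠ v → G.ReachableIn {v}ᶜ a b := fun a b ha hb => by
    by_contra h
    exact hcut (isCutVertex_iff_reachableIn.2 ⟨a, b, ha, hb, hconn.preconnected a b, h⟩)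
  obtain ⟨b, hbB', hbv⟩ : ∃ b ∈ B', b ≠ v := by
    by_contra! h
    exact hne (hB'.2 B (fun z hz => h z hz ▸ hv.1) hB.1).symm
  -- no vertex separates `b` from a vertex of `B`: pass through `v`, or, if `v` is the removed
  -- vertex, use that `v` is not a cut vertex
  have hbB : b ∈ B := by
    refine (isBlock_iff_shareBlock.1 hB).2.2 b fun x hx => ?_
    by_cases hbx : b = x
    · exact hbx ▸ .refl b
    refine (shareBlock_iff_forall_reachableIn (hconn.preconnected b x) hbx).2 fun w hwb hwx => ?_
    by_cases hwv : w = v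
    · exact hwv ▸ havoid b x hbv (hwv ▸ hwx).symm
    have hsub : ∀ D : Set V, D \ {w} ⊆ {w}ᶜ := fun D z hz => hz.2
    exact ((hB'.reachableIn Set.subsingleton_singleton ⟨hbB', Ne.symm hwb⟩
      ⟨hv.2, Ne.symm hwv⟩).mono (hsub B')).trans
      ((hB.reachableIn Set.subsingleton_singleton ⟨hv.1, Ne.symm hwv⟩ ⟨hx, Ne.symm hwx⟩).mono
        (hsub B))
  exact hne (hB.eq_of_mem_inter hB' hbv ⟨hbB, hbB'⟩ hv)

lemma isCutVertex_iff_exists_isBlock (hconn : G.Connected) {v : V} : IsCutVertex G v ↔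
    ∃ B B', IsBlock G B ∧ IsBlock G B' ∧ B ≠ B' ∧ v ∈ B ∧ v ∈ B' := by
  refine ⟨fun hcut => ?_, fun ⟨B, B', hB, hB', hne, hv, hv'⟩ =>
    hB.isCutVertex_of_mem_inter hconn hB' hne ⟨hv, hv'⟩⟩
  obtain ⟨a, b, hav, hbv, ⟨q⟩, hnr⟩ := isCutVertex_iff_reachableIn.1 hcut
  have hp := q.bypass_isPath
  have hvp : v ∈ q.bypass.support := by
    by_contra h
    exact hnr ⟨q.bypass, fun z hz hzv => h (hzv ▸ hz)⟩
  -- `B` and `B'` contain the two edges at `v` of a path from `a` to `b`; if they were equal,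
  -- the path could go around `v` inside this block
  set p₁ := (q.bypass.takeUntil v hvp).reverse
  set p₂ := q.bypass.dropUntil v hvp
  have hn₁ : ¬ p₁.Nil := Walk.not_nil_of_ne hav.symm
  have hn₂ : ¬ p₂.Nil := Walk.not_nil_of_ne hbv.symm
  obtain ⟨B, hB, hvB, hxB⟩ := exists_isBlock_of_adj (p₁.adj_snd hn₁)
  obtain ⟨B', hB', hvB', hyB'⟩ := exists_isBlock_of_adj (p₂.adj_snd hn₂)
  refine ⟨B, B', hB, hB', fun hBB' => hnr ?_, hvB, hvB'⟩
  subst hBB'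
  have hxy := (hB.reachableIn Set.subsingleton_singleton ⟨hxB, (p₁.adj_snd hn₁).ne'⟩
    ⟨hyB', (p₂.adj_snd hn₂).ne'⟩).mono fun z hz => hz.2
  exact ((((hp.takeUntil hvp).reverse.reachableIn_compl_snd hn₁).symm.trans hxy).trans
    ((hp.dropUntil hvp).reachableIn_compl_snd hn₂))

lemma IsBlock.eq_of_not_isCutVertex (hconn : G.Connected) (hB : IsBlock G B)
    (hB' : IsBlock G B') {v : V} (hv : ¬ IsCutVertex G v) (hvB : v ∈ B) (hvB' : v ∈ B') :
    B = B' := by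
  by_contra hne
  exact hv (hB.isCutVertex_of_mem_inter hconn hB' hne ⟨hvB, hvB'⟩)

lemma adj_iff_shareBlock (hG : IsBlockGraph G) {u v : V} :
    G.Adj u v ↔ u ≠ v ∧ G.ShareBlock u v :=
  ⟨fun h => ⟨h.ne, .of_adj h⟩, fun ⟨hne, B, hB, hu, hv⟩ => hG B hB u hu v hv hne⟩

end Blocks

namespace blockTree

variable {V : Type*} {G : SimpleGraph V}

@[simp]
lemma adj_inl_inr {v : {v // IsCutVertex G v}} {B : {B // IsBlock G B}} :
    (blockTree G).Adj (.inl v) (.inr B) ↔ v.1 ∈ B.1 := by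
  refine ⟨?_, fun h => .inl ⟨v, B, rfl, rfl, h⟩⟩
  rintro (⟨v', B', h₁, h₂, h⟩ | ⟨_, _, h₁, -⟩)
  · cases h₁; cases h₂; exact h
  · cases h₁

@[simp]
lemma adj_inr_inl {v : {v // IsCutVertex G v}} {B : {B // IsBlock G B}} :
    (blockTree G).Adj (.inr B) (.inl v) ↔ v.1 ∈ B.1 :=
  (blockTree G).adj_comm _ _ |>.trans adj_inl_inr

@[simp]
lemma not_adj_inl_inl {v w : {v // IsCutVertex G v}} : ¬ (blockTree G).Adj (.inl v) (.inl w) := by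
  simp [blockTree]

@[simp]
lemma not_adj_inr_inr {B B' : {B // IsBlock G B}} : ¬ (blockTree G).Adj (.inr B) (.inr B') := by
  simp [blockTree]

lemma isLeft_eq_not_of_adj {x y : BTVert G} (h : (blockTree G).Adj x y) :
    x.isLeft = !y.isLeft := by
  rcases x with v | B <;> rcases y with w | B' <;> simp_all

lemma isLeft_getVert {X Y : BTVert G} (p : (blockTree G).Walk X Y) {i : ℕ} (hi : i ≤ p.length) :
    (p.getVert i).isLeft = (X.isLeft != decide (Odd i)) := by
  induction i with
  | zero => simp
  | succ i ih =>
    have h := isLeft_eq_not_of_adj (p.adj_getVert_succ (i := i) (by omega))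
    rw [ih (by omega)] at h
    revert h
    cases (p.getVert (i + 1)).isLeft <;> cases X.isLeft <;> by_cases hi : Odd i <;>
      simp [hi, Nat.odd_add_one]

lemma exists_getVert_eq_inr {B₀ : {B // IsBlock G B}} {Y : BTVert G}
    (p : (blockTree G).Walk (.inr B₀) Y) {i : ℕ} (hi : i ≤ p.length) (he : Even i) :
    ∃ B, p.getVert i = .inr B := by
  have := isLeft_getVert p hi
  cases h : p.getVert i
  · simp_all [Nat.not_odd_iff_even.2 he]
  · exact ⟨_, rfl⟩

lemma exists_getVert_eq_inl {B₀ : {B // IsBlock G B}} {Y : BTVert G}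
    (p : (blockTree G).Walk (.inr B₀) Y) {i : ℕ} (hi : i ≤ p.length) (ho : Odd i) :
    ∃ v, p.getVert i = .inl v := by
  have := isLeft_getVert p hi
  cases h : p.getVert i
  · exact ⟨_, rfl⟩
  · simp_all

/-- Going around a cycle of the block tree that starts at a block, the blocks and the cut
vertices form a cyclic chain of blocks with distinct links. -/
lemma not_isCycle_of_inr {B₀ : {B // IsBlock G B}}
    (c : (blockTree G).Walk (.inr B₀) (.inr B₀)) : ¬ c.IsCycle := by
  intro hc
  have hL := hc.three_le_length
  have hpar := isLeft_getVert c (i := c.length) le_rfl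
  rw [c.getVert_length] at hpar
  obtain ⟨m, hm⟩ : Even c.length := by simpa using hpar
  have : NeZero m := ⟨by omega⟩
  have : Fact (1 < m) := ⟨by omega⟩
  have hblock (j : ZMod m) : ∃ B, c.getVert (2 * j.val) = .inr B :=
    exists_getVert_eq_inr c (by have := j.val_lt; omega) (even_two_mul _)
  have hcut (j : ZMod m) : ∃ v, c.getVert (2 * j.val + 1) = .inl v :=
    exists_getVert_eq_inl c (by have := j.val_lt; omega) (odd_two_mul_add_one _)
  choose C hC using hblock
  choose u hu using hcut
  have hinj {i j : ℕ} (hi : i ≤ c.length - 1) (hj : j ≤ c.length - 1)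
      (h : c.getVert i = c.getVert j) : i = j := hc.getVert_injOn' hi hj h
  have hsucc : ∀ j : ZMod m, c.getVert (2 * (j + 1).val) = c.getVert (2 * j.val + 2) := by
    intro j
    rw [ZMod.val_add, ZMod.val_one]
    rcases (Nat.succ_le_of_lt j.val_lt).lt_or_eq with h | h
    · rw [Nat.mod_eq_of_lt h]; rfl
    · rw [show j.val + 1 = m from h, Nat.mod_self, mul_zero,
        show 2 * j.val + 2 = c.length by omega, c.getVert_length, c.getVert_zero]
  have hlink : ∀ j, (u j).1 ∈ (C j).1 ∧ (u j).1 ∈ (C (j + 1)).1 := fun j => by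
    have hj := j.val_lt
    have h₁ := c.adj_getVert_succ (i := 2 * j.val) (by omega)
    have h₂ := c.adj_getVert_succ (i := 2 * j.val + 1) (by omega)
    rw [hC, hu] at h₁
    rw [hu, show 2 * j.val + 1 + 1 = 2 * j.val + 2 by ring, ← hsucc, hC] at h₂
    exact ⟨adj_inr_inl.1 h₁, adj_inl_inr.1 h₂⟩
  have huinj : Function.Injective fun j => (u j).1 := fun i j h => by
    have := hinj (by have := i.val_lt; omega) (by have := j.val_lt; omega)
      ((hu i).trans ((congrArg Sum.inl (Subtype.ext h)).trans (hu j).symm))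
    exact ZMod.val_injective m (by omega)
  have h01 := IsBlock.eq_of_cyclic_chain (fun j => (C j).1) (fun j => (u j).1) (fun j => (C j).2)
    huinj hlink 0 1
  have h0 := hC 0
  have h1 := hC 1
  rw [ZMod.val_zero, mul_zero] at h0
  rw [ZMod.val_one, mul_one] at h1
  have := hinj (i := 0) (j := 2) (by omega) (by omega)
    (h0.trans ((congrArg Sum.inr (Subtype.ext h01)).trans h1.symm))
  omega

lemma isAcyclic : (blockTree G).IsAcyclic := by
  rintro (v | B) c hc
  · have hne : ¬ c.Nil := hc.not_nil
    obtain ⟨B, hB⟩ : ∃ B, c.snd = .inr B := by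
      have := c.adj_snd hne
      cases h : c.snd
      · rw [h] at this; exact absurd this not_adj_inl_inl
      · exact ⟨_, rfl⟩
    have hmem : Sum.inr B ∈ c.support := hB ▸ c.getVert_mem_support 1
    exact not_isCycle_of_inr _ (hc.rotate hmem)
  · exact not_isCycle_of_inr c hc

variable [Finite V]

instance : Finite (BTVert G) :=
  inferInstanceAs (Finite ({v // IsCutVertex G v} ⊕ {B : Set V // IsBlock G B}))

lemma reachable_inr_of_mem (hconn : G.Connected) {u : V} {B B' : {B // IsBlock G B}}
    (hu : u ∈ B.1) (hu' : u ∈ B'.1) : (blockTree G).Reachable (.inr B) (.inr B') := by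
  by_cases h : B = B'
  · exact h ▸ .rfl
  have hcut := B.2.isCutVertex_of_mem_inter hconn B'.2 (fun he => h (Subtype.ext he)) ⟨hu, hu'⟩
  exact (adj_inr_inl (v := ⟨u, hcut⟩).2 hu).reachable.trans (adj_inl_inr.2 hu').reachable

lemma connected (hconn : G.Connected) : (blockTree G).Connected := by
  have hblock : ∀ x : BTVert G, ∃ B : {B // IsBlock G B}, (blockTree G).Reachable x (.inr B) := by
    rintro (v | B)
    · obtain ⟨B, hB, hv⟩ := exists_isBlock_mem G v.1
      exact ⟨⟨B, hB⟩, (adj_inl_inr.2 hv).reachable⟩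
    · exact ⟨B, .rfl⟩
  have hwalk : ∀ {u w : V} (p : G.Walk u w) (B B' : {B // IsBlock G B}), u ∈ B.1 → w ∈ B'.1 →
      (blockTree G).Reachable (.inr B) (.inr B') := by
    intro u w p
    induction p with
    | nil => exact fun B B' hu hu' => reachable_inr_of_mem hconn hu hu'
    | cons hadj q ih =>
      intro B B' hu hw
      obtain ⟨D, hD, haD, hbD⟩ := exists_isBlock_of_adj hadj
      exact (reachable_inr_of_mem hconn hu haD (B' := ⟨D, hD⟩)).trans (ih ⟨D, hD⟩ B' hbD hw)
  obtain ⟨v⟩ := hconn.nonempty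
  obtain ⟨B, hB, -⟩ := exists_isBlock_mem G v
  refine (connected_iff _).2 ⟨fun x y => ?_, ⟨.inr ⟨B, hB⟩⟩⟩
  obtain ⟨Bx, hx⟩ := hblock x
  obtain ⟨By, hy⟩ := hblock y
  obtain ⟨u, hu⟩ := Bx.2.1.1
  obtain ⟨w, hw⟩ := By.2.1.1
  exact (hx.trans (hwalk (hconn.preconnected u w).some Bx By hu hw)).trans hy.symm

lemma isTree (hconn : G.Connected) : (blockTree G).IsTree :=
  ⟨connected hconn, isAcyclic⟩

lemma not_subsingleton_neighborSet_inl (hconn : G.Connected) (v : {v // IsCutVertex G v}) :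
    ¬ ((blockTree G).neighborSet (.inl v)).Subsingleton := fun h => by
  obtain ⟨B, B', hB, hB', hne, hv, hv'⟩ := (isCutVertex_iff_exists_isBlock hconn).1 v.2
  have := h (show (blockTree G).Adj (.inl v) (.inr ⟨B, hB⟩) from adj_inl_inr.2 hv)
    (show (blockTree G).Adj (.inl v) (.inr ⟨B', hB'⟩) from adj_inl_inr.2 hv')
  exact hne (congrArg Subtype.val (Sum.inr_injective this))

variable {V' : Type*} [Finite V'] {G' : SimpleGraph V'}

/-- If `e` sent a cut vertex to a block, then, as it respects the bipartition of the connected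
block tree, it would swap the two sides everywhere and send a leaf of `blockTree G` to a cut
vertex of `G'`. -/
lemma isLeft_apply (hG : G.Connected) (hG' : G'.Connected) (e : BTVert G ≃ BTVert G')
    (he : ∀ x y, (blockTree G).Adj x y ↔ (blockTree G').Adj (e x) (e y)) (x : BTVert G) :
    (e x).isLeft = x.isLeft := by
  have hinv : ∀ {x y}, (blockTree G).Adj x y →
      ((e x).isLeft = x.isLeft ↔ (e y).isLeft = y.isLeft) := fun h => by
    rw [isLeft_eq_not_of_adj h, isLeft_eq_not_of_adj ((he _ _).1 h)]
    simp
  have hconst : ∀ x y, (e x).isLeft = x.isLeft ↔ (e y).isLeft = y.isLeft := fun x y => by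
    obtain ⟨p⟩ := (connected hG).preconnected x y
    induction p with
    | nil => rfl
    | cons h _ ih => exact (hinv h).trans ih
  by_contra hx
  obtain ⟨y, hy⟩ := (isTree hG).exists_subsingleton_neighborSet
  rcases y with v | B
  · exact not_subsingleton_neighborSet_inl hG v hy
  obtain ⟨v', hv'⟩ : ∃ v', e (.inr B) = .inl v' := by
    have := mt (hconst x (.inr B)).2 hx
    cases h : e (.inr B)
    · exact ⟨_, rfl⟩
    · simp_all
  refine not_subsingleton_neighborSet_inl hG' v' (hv' ▸ fun a ha b hb => ?_)
  have := hy ((he _ (e.symm a)).2 (by rwa [e.apply_symm_apply]))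
    ((he _ (e.symm b)).2 (by rwa [e.apply_symm_apply]))
  simpa using this

end blockTree

def blockClosure {V : Type*} (H : SimpleGraph V) : SimpleGraph V where
  Adj u v := u ≠ v ∧ H.ShareBlock u v
  symm := ⟨fun _ _ h => ⟨h.1.symm, h.2.symm⟩⟩
  loopless := ⟨fun _ h => h.1 rfl⟩

namespace blockClosure

variable {V : Type*} {H : SimpleGraph V}

@[simp]
lemma adj_iff {u v : V} : (blockClosure H).Adj u v ↔ u ≠ v ∧ H.ShareBlock u v := Iff.rfl

variable [Finite V]

lemma le_blockClosure : H ≤ blockClosure H := fun _ _ h => adj_iff.2 ⟨h.ne, .of_adj h⟩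

lemma reachableIn_compl_iff {R : Set V} (hR : R.Subsingleton) {u v : V} :
    (blockClosure H).ReachableIn Rᶜ u v ↔ H.ReachableIn Rᶜ u v := by
  refine ⟨?_, .mono_graph le_blockClosure⟩
  rintro ⟨p, hp⟩
  induction p with
  | nil => exact .refl (hp _ (by simp))
  | cons hadj q ih =>
    obtain ⟨-, D, hD, haD, hbD⟩ := adj_iff.1 hadj
    refine ((hD.reachableIn hR ⟨haD, hp _ (by simp)⟩ ⟨hbD, hp _ (by simp)⟩).mono
      fun z hz => hz.2).trans (ih fun z hz => hp z (by simp [hz]))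

lemma reachable_iff {u v : V} : (blockClosure H).Reachable u v ↔ H.Reachable u v := by
  simpa [← reachableIn_univ_iff] using reachableIn_compl_iff (H := H) Set.subsingleton_empty

lemma connected (hH : H.Connected) : (blockClosure H).Connected :=
  (connected_iff _).2 ⟨fun u v => reachable_iff.2 (hH.preconnected u v), hH.nonempty⟩

lemma isCutVertex_iff {v : V} : IsCutVertex (blockClosure H) v ↔ IsCutVertex H v := by
  simp only [isCutVertex_iff_reachableIn, reachable_iff,
    reachableIn_compl_iff Set.subsingleton_singleton]

lemma shareBlock_iff (hH : H.Connected) {u v : V} :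
    (blockClosure H).ShareBlock u v ↔ H.ShareBlock u v := by
  by_cases huv : u = v
  · exact huv ▸ ⟨fun _ => .refl u, fun _ => .refl u⟩
  rw [shareBlock_iff_forall_reachableIn ((connected hH).preconnected u v) huv,
    shareBlock_iff_forall_reachableIn (hH.preconnected u v) huv]
  simp only [reachableIn_compl_iff Set.subsingleton_singleton]

lemma isBlock_iff (hH : H.Connected) {B : Set V} : IsBlock (blockClosure H) B ↔ IsBlock H B := by
  simp only [isBlock_iff_shareBlock, shareBlock_iff hH]

lemma isBlockGraph (hH : H.Connected) : IsBlockGraph (blockClosure H) :=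
  fun _ hB _ hu _ hv hne => adj_iff.2 ⟨hne, _, (isBlock_iff hH).1 hB, hu, hv⟩

end blockClosure

lemma btIso_blockClosure {V : Type*} [Finite V] {H : SimpleGraph V} (hH : H.Connected) :
    BTIso (blockClosure H) H := by
  refine ⟨.sumCongr (.subtypeEquivRight fun _ => blockClosure.isCutVertex_iff)
    (.subtypeEquivRight fun _ => blockClosure.isBlock_iff hH), ?_, ?_⟩
  · rintro (v | B) (w | B')
    · exact iff_of_false blockTree.not_adj_inl_inl blockTree.not_adj_inl_inl
    · show _ ↔ (blockTree H).Adj (.inl ⟨v.1, _⟩) (.inr ⟨B'.1, _⟩)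
      simp
    · show _ ↔ (blockTree H).Adj (.inr ⟨B.1, _⟩) (.inl ⟨w.1, _⟩)
      simp
    · exact iff_of_false blockTree.not_adj_inr_inr blockTree.not_adj_inr_inr
  · rintro (v | B)
    · rfl
    · show (B.1 \ _).ncard = (B.1 \ _).ncard
      simp only [blockClosure.isCutVertex_iff]

/-- The position of a vertex in the block tree: itself if it is a cut vertex, otherwise a block
containing it (unique when `G` is connected). -/
noncomputable def btProj {V : Type*} [Finite V] (G : SimpleGraph V) (x : V) : BTVert G :=
  if h : IsCutVertex G x then .inl ⟨x, h⟩
  else .inr ⟨(exists_isBlock_mem G x).choose, (exists_isBlock_mem G x).choose_spec.1⟩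

namespace btProj

variable {V : Type*} [Finite V] {G : SimpleGraph V} {x : V}

lemma of_isCutVertex (h : IsCutVertex G x) : btProj G x = .inl ⟨x, h⟩ := dif_pos h

lemma exists_of_not_isCutVertex (h : ¬ IsCutVertex G x) :
    ∃ B₀ : {B // IsBlock G B}, btProj G x = .inr B₀ ∧ x ∈ B₀.1 :=
  ⟨_, dif_neg h, (exists_isBlock_mem G x).choose_spec.2⟩

lemma eq_inl_iff {v : {v // IsCutVertex G v}} : btProj G x = .inl v ↔ x = v.1 := by
  by_cases h : IsCutVertex G x
  · rw [of_isCutVertex h]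
    exact Sum.inl_injective.eq_iff.trans Subtype.ext_iff
  · obtain ⟨B₀, hB₀, -⟩ := exists_of_not_isCutVertex h
    rw [hB₀]
    exact iff_of_false Sum.inr_ne_inl fun hx => h (hx ▸ v.2)

lemma eq_inr_iff (hconn : G.Connected) {B : {B // IsBlock G B}} :
    btProj G x = .inr B ↔ x ∈ B.1 \ {v | IsCutVertex G v} := by
  by_cases h : IsCutVertex G x
  · rw [of_isCutVertex h]
    exact iff_of_false Sum.inl_ne_inr fun hx => hx.2 h
  · obtain ⟨B₀, hB₀, hxB₀⟩ := exists_of_not_isCutVertex h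
    rw [hB₀]
    refine Sum.inr_injective.eq_iff.trans ⟨fun hB => hB ▸ ⟨hxB₀, h⟩,
      fun hx => Subtype.ext (B₀.2.eq_of_not_isCutVertex hconn B.2 h hxB₀ hx.1)⟩

lemma mem_iff (hconn : G.Connected) {B : {B // IsBlock G B}} :
    x ∈ B.1 ↔ btProj G x = .inr B ∨ (blockTree G).Adj (btProj G x) (.inr B) := by
  by_cases h : IsCutVertex G x
  · rw [of_isCutVertex h, blockTree.adj_inl_inr]
    exact ⟨.inr, fun h' => h'.resolve_left Sum.inl_ne_inr⟩
  · obtain ⟨B₀, hB₀, hxB₀⟩ := exists_of_not_isCutVertex h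
    rw [eq_inr_iff hconn, hB₀]
    exact ⟨fun hx => .inl ⟨hx, h⟩, fun h' => (h'.resolve_right blockTree.not_adj_inr_inr).1⟩

lemma card_fiber (hconn : G.Connected) (z : BTVert G) :
    Nat.card {x // btProj G x = z} = btWeight G z := by
  rcases z with v | B
  · simp only [eq_inl_iff]
    exact Nat.card_unique
  · simp only [eq_inr_iff hconn]
    exact Nat.card_coe_set_eq _

end btProj

lemma BTIso.exists_iso {V V' : Type*} [Finite V] [Finite V'] {G : SimpleGraph V}
    {G' : SimpleGraph V'} (hG : G.Connected) (hbG : IsBlockGraph G) (hG' : G'.Connected)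
    (hbG' : IsBlockGraph G') (h : BTIso G G') :
    ∃ E : V ≃ V', ∀ x y, G.Adj x y ↔ G'.Adj (E x) (E y) := by
  obtain ⟨e, he, hw⟩ := h
  obtain ⟨E, hE⟩ := Equiv.exists_comp_eq_of_card_fiber (btProj G) (btProj G') e fun z => by
    rw [btProj.card_fiber hG, btProj.card_fiber hG', hw]
  obtain ⟨g, hg⟩ := e.exists_map_inr_of_isLeft (blockTree.isLeft_apply hG hG' e he)
  have hmem : ∀ x B, x ∈ B.1 ↔ E x ∈ (g B).1 := fun x B => by
    rw [btProj.mem_iff hG, btProj.mem_iff hG', hE, ← hg]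
    exact or_congr e.apply_eq_iff_eq.symm (he _ _)
  refine ⟨E, fun x y => ?_⟩
  rw [adj_iff_shareBlock hbG, adj_iff_shareBlock hbG', E.injective.ne_iff]
  refine and_congr_right fun _ => ⟨fun ⟨B, hB, hx, hy⟩ => ?_, fun ⟨B', hB', hx, hy⟩ => ?_⟩
  · exact ⟨_, (g ⟨B, hB⟩).2, (hmem x _).1 hx, (hmem y _).1 hy⟩
  · obtain ⟨B, hB⟩ := g.surjective ⟨B', hB'⟩
    exact ⟨_, B.2, (hmem x B).2 (hB ▸ hx), (hmem y B).2 (hB ▸ hy)⟩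

/-- The weighted block tree map is a bijection (up to isomorphism) between connected
block graphs on n vertices and weighted block trees of weight n (= weighted block trees
of connected graphs on n vertices). -/
theorem stmt_12 (n : ℕ) :
    (∀ H : SimpleGraph (Fin n), H.Connected →
      ∃ G : SimpleGraph (Fin n), G.Connected ∧ IsBlockGraph G ∧ BTIso G H) ∧
    (∀ G G' : SimpleGraph (Fin n), G.Connected → IsBlockGraph G →
      G'.Connected → IsBlockGraph G' → BTIso G G' →
      ∃ e : Fin n ≃ Fin n, ∀ x y, G.Adj x y ↔ G'.Adj (e x) (e y)) :=
  ⟨fun _ hH => ⟨_, blockClosure.connected hH, blockClosure.isBlockGraph hH, btIso_blockClosure hH⟩,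
    fun _ _ hG hbG hG' hbG' h => h.exists_iso hG hbG hG' hbG'⟩
end

section
/- Every weighted tree (T,w) with non-negative integer weights and positive total weight can be transformed into a canonical weighted tree of the same total weight by contracting each maximal connected subgraph of zero-weight vertices to a single zero-weight vertex and then deleting all zero-weight leaves, and the resulting canonical weighted tree is unique. -/
open SimpleGraph
open scoped Classical

/-- A weighted tree is canonical if the zero-weight vertices form an independent set
and every leaf has positive weight. -/
def Canonical {V : Type*} (T : SimpleGraph V) (w : V → ℕ) : Prop :=
  (∀ u v, T.Adj u v → ¬(w u = 0 ∧ w v = 0)) ∧ (∀ v, IsLeaf T v → 0 < w v)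

/-- v and u are joined by a walk all of whose vertices have weight zero. -/
def ZeroReach {V : Type*} (T : SimpleGraph V) (w : V → ℕ) (v u : V) : Prop :=
  ∃ p : T.Walk v u, ∀ x ∈ p.support, w x = 0

/-- (T', w') is obtained from (T, w) by contracting each maximal connected subgraph of
zero-weight vertices to a single zero-weight vertex and deleting some zero-weight
vertices, as recorded by the map φ (φ v = none means v was deleted; vertices with the
same image some v' form one contracted fiber). -/
def Contraction {V V' : Type*} [Fintype V] (T : SimpleGraph V) (w : V → ℕ)
    (T' : SimpleGraph V') (w' : V' → ℕ) (φ : V → Option V') : Prop :=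
  (∀ v', ∃ v, φ v = some v') ∧
  (∀ v, φ v = none → w v = 0) ∧
  (∀ v u, v ≠ u → φ v = φ u → φ v ≠ none → w v = 0 ∧ w u = 0) ∧
  (∀ v u, ZeroReach T w v u → φ v = φ u) ∧
  (∀ v u, v ≠ u → φ v = φ u → φ v ≠ none → ZeroReach T w v u) ∧
  (∀ v' : V', w' v' = ∑ v : V, if φ v = some v' then w v else 0) ∧
  (∀ a b : V', a ≠ b → (T'.Adj a b ↔ ∃ x y, T.Adj x y ∧ φ x = some a ∧ φ y = some b))

/-! Call a vertex *kept* if it has positive weight, or if its maximal zero-weight component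
has at least two positive-weight neighbours. For a contraction of a tree, the image is a
canonical tree exactly when the deleted vertices are the non-kept ones: a kept zero component
separates two positive vertices of the tree, so deleting it would disconnect the image, while a
surviving non-kept component would become a zero-weight leaf. Since the fibres of a contraction
are determined by the zero components, two contractions deleting the same vertices are
isomorphic. Existence is the quotient of the kept vertices by zero-connectivity. -/

section

variable {V V' : Type*} {T : SimpleGraph V} {w : V → ℕ}

namespace ZeroReach

theorem symm {v u : V} (h : ZeroReach T w v u) : ZeroReach T w u v := by
  obtain ⟨p, hp⟩ := h
  exact ⟨p.reverse, by simpa using hp⟩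

theorem trans {v u x : V} (h : ZeroReach T w v u) (h' : ZeroReach T w u x) :
    ZeroReach T w v x := by
  obtain ⟨p, hp⟩ := h
  obtain ⟨q, hq⟩ := h'
  refine ⟨p.append q, fun m hm => ?_⟩
  rcases (Walk.mem_support_append_iff p q).1 hm with hm | hm
  exacts [hp m hm, hq m hm]

theorem weight_left {v u : V} (h : ZeroReach T w v u) : w v = 0 :=
  h.elim fun p hp => hp v p.start_mem_support

theorem weight_right {v u : V} (h : ZeroReach T w v u) : w u = 0 :=
  h.symm.weight_left

theorem of_adj {v u : V} (h : T.Adj v u) (hv : w v = 0) (hu : w u = 0) : ZeroReach T w v u :=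
  ⟨h.toWalk, by simp [hv, hu]⟩

theorem of_mem_support {v u m : V} (p : T.Walk v u) (hp : ∀ x ∈ p.support, w x = 0)
    (hm : m ∈ p.support) : ZeroReach T w v m :=
  ⟨p.takeUntil m hm, fun x hx => hp x (p.support_takeUntil_subset_support hm hx)⟩

end ZeroReach

def zeroSetoid (T : SimpleGraph V) (w : V → ℕ) : Setoid V where
  r v u := v = u ∨ ZeroReach T w v u
  iseqv.refl _ := .inl rfl
  iseqv.symm := by rintro v u (rfl | h); exacts [.inl rfl, .inr h.symm]
  iseqv.trans := by
    rintro v u x (rfl | h) (rfl | h')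
    exacts [.inl rfl, .inr h', .inr h, .inr (h.trans h')]

theorem weight_eq_zero_of_zeroSetoid {v u : V} (h : zeroSetoid T w v u) (hv : w v = 0) :
    w u = 0 := by
  rcases h with rfl | h
  exacts [hv, h.weight_right]

theorem exists_walk_zeroSetoid {v u : V} (h : zeroSetoid T w v u) :
    ∃ p : T.Walk v u, ∀ m ∈ p.support, zeroSetoid T w v m := by
  rcases h with rfl | ⟨p, hp⟩
  · exact ⟨.nil, by simp⟩
  · exact ⟨p, fun m hm => .inr (.of_mem_support p hp hm)⟩

def posNeighbors (T : SimpleGraph V) (w : V → ℕ) (v : V) : Set V :=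
  {p | 0 < w p ∧ ∃ z, zeroSetoid T w z v ∧ T.Adj p z}

theorem posNeighbors_congr {v u : V} (h : zeroSetoid T w v u) :
    posNeighbors T w v = posNeighbors T w u := by
  ext p
  have (z : V) : zeroSetoid T w z v ↔ zeroSetoid T w z u :=
    ⟨fun hz => (zeroSetoid T w).trans hz h,
      fun hz => (zeroSetoid T w).trans hz ((zeroSetoid T w).symm h)⟩
  simp only [posNeighbors, Set.mem_ofPred_eq, this]

theorem not_zeroSetoid_of_mem_posNeighbors {p v : V} (hp : p ∈ posNeighbors T w v) :
    ¬ zeroSetoid T w p v := by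
  obtain ⟨hpos, z, hz, hadj⟩ := hp
  intro hpv
  rcases (zeroSetoid T w).trans hpv ((zeroSetoid T w).symm hz) with h | h
  · exact hadj.ne h
  · exact hpos.ne' h.weight_left

/-- A zero-weight class with at most one positive neighbour would become a leaf (or an isolated
vertex) after contraction, so it is deleted. -/
def IsKept (T : SimpleGraph V) (w : V → ℕ) (v : V) : Prop :=
  0 < w v ∨ 2 ≤ (posNeighbors T w v).ncard

theorem weight_eq_zero_of_not_isKept {v : V} (h : ¬ IsKept T w v) : w v = 0 :=
  Nat.eq_zero_of_not_pos fun hv => h (.inl hv)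

theorem IsKept.of_zeroSetoid {v u : V} (hk : IsKept T w v) (h : zeroSetoid T w v u) :
    IsKept T w u := by
  rcases h with rfl | h
  · exact hk
  · rw [IsKept, h.weight_left, posNeighbors_congr (.inr h)] at hk
    exact .inr (hk.resolve_left (lt_irrefl 0))

theorem SimpleGraph.Walk.exists_mem_support_posNeighbors {v c x : V} (hv : w v = 0)
    (q : T.Walk c x) (hc : zeroSetoid T w c v) (hx : ¬ zeroSetoid T w x v) :
    ∃ d ∈ q.support, d ∈ posNeighbors T w v := by
  induction q with
  | nil => exact absurd hc hx
  | @cons c m x hcm q ih =>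
    by_cases hm : zeroSetoid T w m v
    · obtain ⟨d, hd, hdP⟩ := ih hm hx
      exact ⟨d, List.mem_cons_of_mem _ hd, hdP⟩
    · have hc0 : w c = 0 := weight_eq_zero_of_zeroSetoid ((zeroSetoid T w).symm hc) hv
      have hm0 : 0 < w m := Nat.pos_of_ne_zero fun hm0 =>
        hm ((zeroSetoid T w).trans ((zeroSetoid T w).symm (.inr (.of_adj hcm hc0 hm0))) hc)
      exact ⟨m, by simp, hm0, c, hc, hcm.symm⟩

theorem SimpleGraph.Walk.IsPath.isKept_of_mem_support [Finite V] {x y c : V} {p : T.Walk x y}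
    (hp : p.IsPath) (hx : IsKept T w x) (hy : IsKept T w y) (hc : c ∈ p.support) :
    IsKept T w c := by
  by_contra hck
  have hc0 := weight_eq_zero_of_not_isKept hck
  have hout {z : V} (hz : IsKept T w z) : ¬ zeroSetoid T w z c := fun h =>
    hck (hz.of_zeroSetoid h)
  obtain ⟨d₁, hd₁, hd₁P⟩ := (p.takeUntil c hc).reverse.exists_mem_support_posNeighbors hc0
    ((zeroSetoid T w).refl c) (hout hx)
  obtain ⟨d₂, hd₂, hd₂P⟩ := (p.dropUntil c hc).exists_mem_support_posNeighbors hc0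
    ((zeroSetoid T w).refl c) (hout hy)
  have hP : (posNeighbors T w c).ncard ≤ 1 := by
    by_contra h; exact hck (.inr (by omega))
  obtain rfl : d₁ = d₂ := (Set.ncard_le_one (Set.toFinite _)).1 hP d₁ hd₁P d₂ hd₂P
  have hd₁c : d₁ ≠ c := fun h => (h ▸ hd₁P).1.ne' hc0
  have hnodup := hp.support_nodup
  rw [← p.take_spec hc, Walk.support_append] at hnodup
  rw [Walk.support_reverse, List.mem_reverse] at hd₁
  rw [← Walk.cons_tail_support, List.mem_cons] at hd₂
  exact List.disjoint_of_nodup_append hnodup hd₁ (hd₂.resolve_left hd₁c)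

/-- If `W` avoided `C`, then `W` followed by `q zq` and `Z` would be a walk from `p` to `zp`
avoiding the edge `p zp`, which is a bridge. -/
theorem SimpleGraph.IsAcyclic.exists_mem_support_of_adj (hT : T.IsAcyclic) {C : Set V}
    {p q zp zq : V} (hpC : p ∉ C) (hpq : p ≠ q) (hp : T.Adj p zp) (hq : T.Adj q zq)
    (Z : T.Walk zq zp) (hZ : ∀ m ∈ Z.support, m ∈ C) (W : T.Walk p q) : ∃ z ∈ W.support, z ∈ C := by
  by_contra! hW
  have hbridge := isBridge_iff_forall_walk_mem_edges.1
    (isAcyclic_iff_forall_adj_isBridge.1 hT hp) (W.append (.cons hq Z))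
  rw [Walk.edges_append, Walk.edges_cons, List.mem_append, List.mem_cons] at hbridge
  rcases hbridge with h | h | h
  · exact hW zp (W.snd_mem_support_of_mem_edges h) (hZ zp Z.end_mem_support)
  · rcases Sym2.eq_iff.1 h with ⟨rfl, -⟩ | ⟨rfl, -⟩
    exacts [hpq rfl, hpC (hZ p Z.start_mem_support)]
  · exact hpC (hZ p (Z.fst_mem_support_of_mem_edges h))

theorem SimpleGraph.Walk.exists_lift {G : SimpleGraph V} {H : SimpleGraph V'}
    {φ : V → Option V'}
    (hfib : ∀ x u a, φ x = some a → φ u = some a →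
      ∃ q : G.Walk x u, ∀ m ∈ q.support, φ m = some a)
    (hadj : ∀ a b, H.Adj a b → ∃ x y, G.Adj x y ∧ φ x = some a ∧ φ y = some b)
    {a b : V'} (W : H.Walk a b) {x y : V} (hx : φ x = some a) (hy : φ y = some b) :
    ∃ q : G.Walk x y, ∀ m ∈ q.support, φ m ≠ none := by
  induction W generalizing x with
  | nil =>
    obtain ⟨q, hq⟩ := hfib x y _ hx hy
    exact ⟨q, fun m hm => by simp [hq m hm]⟩
  | cons hab W ih =>
    obtain ⟨x₁, y₁, hxy₁, hx₁, hy₁⟩ := hadj _ _ hab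
    obtain ⟨q₁, hq₁⟩ := hfib x x₁ _ hx hx₁
    obtain ⟨q₂, hq₂⟩ := ih hy₁ hy
    refine ⟨q₁.append (.cons hxy₁ q₂), fun m hm => ?_⟩
    rw [Walk.mem_support_append_iff, Walk.support_cons, List.mem_cons] at hm
    rcases hm with hm | rfl | hm
    exacts [by simp [hq₁ m hm], by simp [hx₁], hq₂ m hm]

theorem exists_equiv_of_eq_iff_eq {V₁ V₂ : Type*} {φ₁ : V → Option V₁}
    {φ₂ : V → Option V₂} (h₁ : ∀ a, ∃ v, φ₁ v = some a) (h₂ : ∀ b, ∃ v, φ₂ v = some b)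
    (hnone : ∀ v, φ₁ v = none ↔ φ₂ v = none)
    (h : ∀ v u, φ₁ v = φ₁ u ↔ φ₂ v = φ₂ u) :
    ∃ e : V₁ ≃ V₂, ∀ v, φ₂ v = (φ₁ v).map e := by
  have hf (a : V₁) : ∃ b, ∀ v, φ₁ v = some a ↔ φ₂ v = some b := by
    obtain ⟨v₀, hv₀⟩ := h₁ a
    obtain ⟨b, hb⟩ := Option.ne_none_iff_exists'.1 ((hnone v₀).not.1 (by simp [hv₀]))
    exact ⟨b, fun v => by rw [← hv₀, ← hb, h]⟩
  choose f hf using hf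
  have hmap (v : V) : φ₂ v = (φ₁ v).map f := by
    cases hv : φ₁ v with
    | none => exact (hnone v).1 hv
    | some a => exact (hf a v).1 hv
  refine ⟨Equiv.ofBijective f ⟨fun a a' haa' => ?_, fun b => ?_⟩, hmap⟩
  · obtain ⟨v, hv⟩ := h₁ a
    refine Option.some_injective _ (hv.symm.trans ((hf a' v).2 ?_))
    rw [hmap, hv, Option.map_some, haa']
  · obtain ⟨v, hv⟩ := h₂ b
    obtain ⟨a, ha⟩ := Option.ne_none_iff_exists'.1 ((hnone v).not.2 (by simp [hv]))
    exact ⟨a, Option.some_injective _ (by rw [← hv, hmap, ha, Option.map_some])⟩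

namespace Contraction

variable [Fintype V] {T' : SimpleGraph V'} {w' : V' → ℕ} {φ : V → Option V'}

theorem exists_eq_some (hc : Contraction T w T' w' φ) (a : V') : ∃ v, φ v = some a :=
  hc.1 a

theorem weight_eq_zero_of_eq_none (hc : Contraction T w T' w' φ) {v : V} (hv : φ v = none) :
    w v = 0 :=
  hc.2.1 v hv

theorem weight_eq_sum (hc : Contraction T w T' w' φ) (a : V') :
    w' a = ∑ v, if φ v = some a then w v else 0 :=
  hc.2.2.2.2.2.1 a

theorem adj_iff (hc : Contraction T w T' w' φ) {a b : V'} (hab : a ≠ b) :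
    T'.Adj a b ↔ ∃ x y, T.Adj x y ∧ φ x = some a ∧ φ y = some b :=
  hc.2.2.2.2.2.2 a b hab

theorem exists_adj_of_adj (hc : Contraction T w T' w' φ) {a b : V'} (hab : T'.Adj a b) :
    ∃ x y, T.Adj x y ∧ φ x = some a ∧ φ y = some b :=
  (hc.adj_iff hab.ne).1 hab

theorem ne_none_of_pos (hc : Contraction T w T' w' φ) {v : V} (hv : 0 < w v) : φ v ≠ none :=
  fun h => hv.ne' (hc.weight_eq_zero_of_eq_none h)

theorem eq_of_zeroSetoid (hc : Contraction T w T' w' φ) {v u : V} (h : zeroSetoid T w v u) :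
    φ v = φ u := by
  rcases h with rfl | h
  exacts [rfl, hc.2.2.2.1 v u h]

theorem zeroSetoid_of_eq (hc : Contraction T w T' w' φ) {v u : V} (h : φ v = φ u)
    (hv : φ v ≠ none) : zeroSetoid T w v u := by
  by_cases hvu : v = u
  exacts [.inl hvu, .inr (hc.2.2.2.2.1 v u hvu h hv)]

theorem eq_iff_zeroSetoid (hc : Contraction T w T' w' φ) {v u : V} (hv : φ v ≠ none) :
    φ v = φ u ↔ zeroSetoid T w v u :=
  ⟨fun h => hc.zeroSetoid_of_eq h hv, hc.eq_of_zeroSetoid⟩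

theorem finite (hc : Contraction T w T' w' φ) : Finite V' := by
  choose s hs using hc.exists_eq_some
  exact Finite.of_injective s fun a b h => Option.some_injective _ (by rw [← hs, ← hs, h])

theorem weight_eq_zero_iff (hc : Contraction T w T' w' φ) {a : V'} :
    w' a = 0 ↔ ∀ v, φ v = some a → w v = 0 := by
  simp [hc.weight_eq_sum a, Finset.sum_eq_zero_iff]

theorem exists_walk_of_eq_some (hc : Contraction T w T' w' φ) {x u : V} {a : V'}
    (hx : φ x = some a) (hu : φ u = some a) :
    ∃ q : T.Walk x u, ∀ m ∈ q.support, φ m = some a := by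
  obtain ⟨q, hq⟩ :=
    exists_walk_zeroSetoid (hc.zeroSetoid_of_eq (hx.trans hu.symm) (by simp [hx]))
  exact ⟨q, fun m hm => (hc.eq_of_zeroSetoid (hq m hm)).symm.trans hx⟩

theorem exists_walk_lift (hc : Contraction T w T' w' φ) {a b : V'} (W : T'.Walk a b) {x y : V}
    (hx : φ x = some a) (hy : φ y = some b) :
    ∃ q : T.Walk x y, ∀ m ∈ q.support, φ m ≠ none :=
  W.exists_lift (fun _ _ _ => hc.exists_walk_of_eq_some)
    (fun _ _ => hc.exists_adj_of_adj) hx hy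

theorem reachable_of_walk (hc : Contraction T w T' w' φ) {x y : V} (p : T.Walk x y)
    (hp : ∀ m ∈ p.support, φ m ≠ none) {a b : V'} (hx : φ x = some a) (hy : φ y = some b) :
    T'.Reachable a b := by
  induction p generalizing a with
  | nil =>
    obtain rfl := Option.some_injective _ (hx.symm.trans hy)
    rfl
  | @cons x m y hxm p ih =>
    obtain ⟨c, hm⟩ := Option.ne_none_iff_exists'.1 (hp m (by simp))
    have hrest := ih (fun u hu => hp u (List.mem_cons_of_mem _ hu)) hm hy
    by_cases hac : a = c
    · exact hac ▸ hrest
    · exact ((hc.adj_iff hac).2 ⟨x, m, hxm, hx, hm⟩).reachable.trans hrest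

theorem isAcyclic (hc : Contraction T w T' w' φ) (hT : T.IsAcyclic) : T'.IsAcyclic := by
  refine isAcyclic_iff_forall_adj_isBridge.2 fun a b hab => isBridge_iff.2 fun hreach => ?_
  obtain ⟨x, y, hxy, hx, hy⟩ := hc.exists_adj_of_adj hab
  have hsep {x' y' : V} {c d : V'} (hx' : φ x' = some c) (hy' : φ y' = some d)
      (he : s(x', y') = s(x, y)) : s(c, d) = s(a, b) := by
    rcases Sym2.eq_iff.1 he with ⟨rfl, rfl⟩ | ⟨rfl, rfl⟩
    · rw [Option.some_injective _ (hx'.symm.trans hx),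
        Option.some_injective _ (hy'.symm.trans hy)]
    · rw [Option.some_injective _ (hx'.symm.trans hy),
        Option.some_injective _ (hy'.symm.trans hx), Sym2.eq_swap]
  obtain ⟨W⟩ := hreach
  obtain ⟨q, -⟩ := W.exists_lift (G := T.deleteEdges {s(x, y)})
    (fun u u' c hu hu' => by
      obtain ⟨q, hq⟩ := hc.exists_walk_of_eq_some hu hu'
      refine ⟨q.toDeleteEdge _ fun he => hab.ne ?_, fun m hm => hq m (by simpa using hm)⟩
      have := hsep (hq x (q.fst_mem_support_of_mem_edges he))
        (hq y (q.snd_mem_support_of_mem_edges he)) rfl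
      rcases Sym2.eq_iff.1 this with ⟨rfl, rfl⟩ | ⟨rfl, rfl⟩ <;> rfl)
    (fun c d hcd => by
      rw [deleteEdges_adj, Set.mem_singleton_iff] at hcd
      obtain ⟨x', y', hxy', hx', hy'⟩ := hc.exists_adj_of_adj hcd.1
      refine ⟨x', y', (deleteEdges_adj ..).2 ⟨hxy', fun he => hcd.2 ?_⟩, hx', hy'⟩
      exact hsep hx' hy' he)
    hx hy
  exact isBridge_iff.1 (isAcyclic_iff_forall_adj_isBridge.1 hT hxy) q.reachable

theorem not_adj_of_weight_eq_zero (hc : Contraction T w T' w' φ) {a b : V'} (hab : T'.Adj a b) :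
    ¬ (w' a = 0 ∧ w' b = 0) := by
  rintro ⟨ha, hb⟩
  obtain ⟨x, y, hxy, hx, hy⟩ := hc.exists_adj_of_adj hab
  have := hc.eq_of_zeroSetoid (.inr (.of_adj hxy (hc.weight_eq_zero_iff.1 ha x hx)
    (hc.weight_eq_zero_iff.1 hb y hy)))
  exact hab.ne (Option.some_injective _ (hx.symm.trans (this.trans hy)))

theorem adj_iff_exists_posNeighbors (hc : Contraction T w T' w' φ) {v : V} {c a : V'}
    (hv : w v = 0) (hvc : φ v = some c) :
    T'.Adj c a ↔ ∃ p ∈ posNeighbors T w v, φ p = some a := by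
  constructor
  · intro hca
    obtain ⟨x, y, hxy, hx, hy⟩ := hc.exists_adj_of_adj hca
    have hxv : zeroSetoid T w x v := hc.zeroSetoid_of_eq (hx.trans hvc.symm) (by simp [hx])
    have hx0 := weight_eq_zero_of_zeroSetoid ((zeroSetoid T w).symm hxv) hv
    refine ⟨y, ⟨Nat.pos_of_ne_zero fun hy0 => hca.ne ?_, x, hxv, hxy.symm⟩, hy⟩
    exact Option.some_injective _ <| hx.symm.trans <|
      (hc.eq_of_zeroSetoid (.inr (.of_adj hxy hx0 hy0))).trans hy
  · rintro ⟨p, hpP, hp⟩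
    obtain ⟨hp0, z, hzv, hpz⟩ := hpP
    have hz : φ z = some c := (hc.eq_of_zeroSetoid hzv).trans hvc
    have hca : c ≠ a := by
      rintro rfl
      exact not_zeroSetoid_of_mem_posNeighbors ⟨hp0, z, hzv, hpz⟩
        (hc.zeroSetoid_of_eq (hp.trans hvc.symm) (by simp [hp]))
    exact (hc.adj_iff hca).2 ⟨z, p, hpz.symm, hz, hp⟩

theorem ncard_neighborSet (hc : Contraction T w T' w' φ) {v : V} {c : V'} (hv : w v = 0)
    (hvc : φ v = some c) : (T'.neighborSet c).ncard = (posNeighbors T w v).ncard := by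
  have hnbr : T'.neighborSet c = some ⁻¹' (φ '' posNeighbors T w v) := by
    ext a
    simp [hc.adj_iff_exists_posNeighbors hv hvc]
  rw [hnbr, Set.ncard_preimage_of_injective_subset_range (Option.some_injective _)]
  · refine Set.InjOn.ncard_image fun p hp q _ hpq => ?_
    rcases hc.zeroSetoid_of_eq hpq (hc.ne_none_of_pos hp.1) with h | h
    exacts [h, absurd h.weight_left hp.1.ne']
  · rintro _ ⟨p, hp, rfl⟩
    exact Option.ne_none_iff_exists.1 (hc.ne_none_of_pos hp.1)

theorem finsum_weight (hc : Contraction T w T' w' φ) : ∑ᶠ a, w' a = ∑ v, w v := by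
  have := hc.finite
  have := Fintype.ofFinite V'
  rw [finsum_eq_sum_of_fintype]
  simp_rw [hc.weight_eq_sum]
  rw [Finset.sum_comm]
  refine Finset.sum_congr rfl fun v _ => ?_
  cases hv : φ v with
  | none => simp [hc.weight_eq_zero_of_eq_none hv]
  | some a => simp

theorem ne_none_of_isKept (hc : Contraction T w T' w' φ) (hT : T.IsAcyclic)
    (hconn : T'.Connected) {v : V} (hk : IsKept T w v) : φ v ≠ none := by
  rcases hk with hv | h2
  · exact hc.ne_none_of_pos hv
  obtain ⟨p, q, hp, hq, hpq⟩ := (Set.one_lt_ncard_iff (Set.toFinite _)).1 h2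
  obtain ⟨a, ha⟩ := Option.ne_none_iff_exists'.1 (hc.ne_none_of_pos hp.1)
  obtain ⟨b, hb⟩ := Option.ne_none_iff_exists'.1 (hc.ne_none_of_pos hq.1)
  obtain ⟨W, hW⟩ := hc.exists_walk_lift (hconn.preconnected a b).some ha hb
  have hpC := not_zeroSetoid_of_mem_posNeighbors hp
  obtain ⟨-, zp, hzp, hpzp⟩ := hp
  obtain ⟨-, zq, hzq, hqzq⟩ := hq
  obtain ⟨Z, hZ⟩ :=
    exists_walk_zeroSetoid ((zeroSetoid T w).trans hzq ((zeroSetoid T w).symm hzp))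
  obtain ⟨z, hz, hzv⟩ := hT.exists_mem_support_of_adj (C := {m | zeroSetoid T w m v}) hpC hpq
    hpzp hqzq Z (fun m hm => (zeroSetoid T w).trans ((zeroSetoid T w).symm (hZ m hm)) hzq) W
  exact hc.eq_of_zeroSetoid hzv ▸ hW z hz

theorem eq_none_of_not_isKept (hc : Contraction T w T' w' φ) (hconn : T'.Connected)
    (hcan : Canonical T' w') (hw : ∃ u, 0 < w u) {v : V} (hk : ¬ IsKept T w v) :
    φ v = none := by
  by_contra hv
  obtain ⟨a, ha⟩ := Option.ne_none_iff_exists'.1 hv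
  have hv0 := weight_eq_zero_of_not_isKept hk
  have ha0 : w' a = 0 := hc.weight_eq_zero_iff.2 fun u hu =>
    weight_eq_zero_of_zeroSetoid (hc.zeroSetoid_of_eq (ha.trans hu.symm) hv) hv0
  have hdeg : (T'.neighborSet a).ncard ≤ 1 := by
    rw [hc.ncard_neighborSet hv0 ha]
    by_contra h
    exact hk (.inr (by omega))
  obtain ⟨u, hu⟩ := hw
  obtain ⟨b, hb⟩ := Option.ne_none_iff_exists'.1 (hc.ne_none_of_pos hu)
  have hab : a ≠ b := by
    rintro rfl
    exact hu.ne' (hc.weight_eq_zero_iff.1 ha0 u hb)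
  obtain ⟨c, hac⟩ : ∃ c, T'.Adj a c := by
    cases (hconn.preconnected a b).some with
    | nil => exact absurd rfl hab
    | cons h _ => exact ⟨_, h⟩
  have := hc.finite
  have hpos : (T'.neighborSet a).ncard ≠ 0 := Set.ncard_ne_zero_of_mem hac
  exact (hcan.2 a (by unfold IsLeaf; omega)).ne' ha0

theorem isTree_of_eq_none_iff (hc : Contraction T w T' w' φ) (hT : T.IsTree)
    (hw : ∃ u, 0 < w u) (hφ : ∀ v, φ v = none ↔ ¬ IsKept T w v) : T'.IsTree := by
  refine ⟨?_, hc.isAcyclic hT.isAcyclic⟩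
  obtain ⟨u, hu⟩ := hw
  obtain ⟨a₀, -⟩ := Option.ne_none_iff_exists'.1 (hc.ne_none_of_pos hu)
  have : Nonempty V' := ⟨a₀⟩
  have hkept {z : V} {c : V'} (h : φ z = some c) : IsKept T w z :=
    not_not.1 ((hφ z).not.1 (by simp [h]))
  refine ⟨fun a b => ?_⟩
  obtain ⟨x, hx⟩ := hc.exists_eq_some a
  obtain ⟨y, hy⟩ := hc.exists_eq_some b
  obtain ⟨p, hp⟩ := (hT.connected.preconnected x y).some.toPath
  exact hc.reachable_of_walk p (fun m hm => (hφ m).not.2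
    (not_not.2 (hp.isKept_of_mem_support (hkept hx) (hkept hy) hm))) hx hy

theorem canonical_of_eq_none_iff (hc : Contraction T w T' w' φ)
    (hφ : ∀ v, φ v = none ↔ ¬ IsKept T w v) : Canonical T' w' := by
  refine ⟨fun _ _ => hc.not_adj_of_weight_eq_zero, fun a ha => ?_⟩
  obtain ⟨v, hv⟩ := hc.exists_eq_some a
  refine Nat.pos_of_ne_zero fun ha0 => ?_
  have hv0 : w v = 0 := hc.weight_eq_zero_iff.1 ha0 v hv
  have hk : IsKept T w v := not_not.1 ((hφ v).not.1 (by simp [hv]))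
  have := hc.ncard_neighborSet hv0 hv
  unfold IsLeaf at ha
  rcases hk with h | h <;> omega

theorem isTree_and_canonical_iff (hc : Contraction T w T' w' φ) (hT : T.IsTree)
    (hw : ∃ u, 0 < w u) :
    T'.IsTree ∧ Canonical T' w' ↔ ∀ v, φ v = none ↔ ¬ IsKept T w v :=
  ⟨fun ⟨htree, hcan⟩ _ =>
      ⟨fun h hk => hc.ne_none_of_isKept hT.isAcyclic htree.connected hk h,
        hc.eq_none_of_not_isKept htree.connected hcan hw⟩,
    fun hφ => ⟨hc.isTree_of_eq_none_iff hT hw hφ, hc.canonical_of_eq_none_iff hφ⟩⟩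

variable {V₁ V₂ : Type*} {T₁ : SimpleGraph V₁} {T₂ : SimpleGraph V₂}
  {w₁ : V₁ → ℕ} {w₂ : V₂ → ℕ} {φ₁ : V → Option V₁} {φ₂ : V → Option V₂}

theorem exists_equiv (hc₁ : Contraction T w T₁ w₁ φ₁)
    (hc₂ : Contraction T w T₂ w₂ φ₂) (hnone : ∀ v, φ₁ v = none ↔ φ₂ v = none) :
    ∃ e : V₁ ≃ V₂, (∀ x y, T₁.Adj x y ↔ T₂.Adj (e x) (e y)) ∧
      ∀ x, w₂ (e x) = w₁ x := by
  have hker (v u : V) : φ₁ v = φ₁ u ↔ φ₂ v = φ₂ u := by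
    by_cases hv : φ₁ v = none
    · rw [hv, (hnone v).1 hv, eq_comm, hnone u, eq_comm]
    · rw [hc₁.eq_iff_zeroSetoid hv, hc₂.eq_iff_zeroSetoid ((hnone v).not.1 hv)]
  obtain ⟨e, he⟩ :=
    exists_equiv_of_eq_iff_eq hc₁.exists_eq_some hc₂.exists_eq_some hnone hker
  have hsome (v : V) (a : V₁) : φ₂ v = some (e a) ↔ φ₁ v = some a := by
    simp [he, Option.map_eq_some_iff]
  refine ⟨e, fun x y => ?_, fun a => ?_⟩
  · rcases eq_or_ne x y with rfl | hxy
    · simp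
    · rw [hc₁.adj_iff hxy, hc₂.adj_iff (e.injective.ne hxy)]
      simp only [hsome]
  · rw [hc₁.weight_eq_sum, hc₂.weight_eq_sum]
    simp only [hsome]

end Contraction

def imageGraph (T : SimpleGraph V) (φ : V → Option V') : SimpleGraph V' :=
  fromRel fun a b => ∃ x y, T.Adj x y ∧ φ x = some a ∧ φ y = some b

noncomputable def fiberWeight [Fintype V] (w : V → ℕ) (φ : V → Option V') (a : V') : ℕ :=
  ∑ v, if φ v = some a then w v else 0

theorem Contraction.of_imageGraph [Fintype V] {φ : V → Option V'}
    (hsurj : ∀ a, ∃ v, φ v = some a) (hnone : ∀ v, φ v = none → w v = 0)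
    (hzero : ∀ v u, ZeroReach T w v u → φ v = φ u)
    (hfiber : ∀ v u, v ≠ u → φ v = φ u → φ v ≠ none → ZeroReach T w v u) :
    Contraction T w (imageGraph T φ) (fiberWeight w φ) φ := by
  refine ⟨hsurj, hnone, fun v u hvu h hv => ?_, hzero, hfiber, fun _ => rfl, fun a b hab => ?_⟩
  · have := hfiber v u hvu h hv
    exact ⟨this.weight_left, this.weight_right⟩
  · rw [imageGraph, fromRel_adj]
    refine ⟨fun ⟨_, h⟩ => h.elim id ?_, fun h => ⟨hab, .inl h⟩⟩
    exact fun ⟨x, y, hxy, hx, hy⟩ => ⟨y, x, hxy.symm, hy, hx⟩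

variable (T w) in
abbrev KeptClass : Type _ := Quotient ((zeroSetoid T w).comap ((↑) : {v // IsKept T w v} → V))

variable (T w) in
/-- Labels the surviving classes by `Fin n`, so that the canonical tree lives in `Type`. -/
noncomputable def contract [Finite V] (v : V) : Option (Fin (Nat.card (KeptClass T w))) :=
  if h : IsKept T w v then some (Finite.equivFin _ (Quotient.mk _ ⟨v, h⟩)) else none

section contract

variable [Finite V]

theorem contract_eq_none_iff {v : V} : contract T w v = none ↔ ¬ IsKept T w v := by
  unfold contract
  split <;> simp_all

theorem contract_eq_contract_iff {v u : V} (hv : IsKept T w v) :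
    contract T w v = contract T w u ↔ zeroSetoid T w v u := by
  by_cases hu : IsKept T w u
  · simp [contract, hv, hu, Quotient.eq, Setoid.comap_rel]
  · simp only [contract, hv, hu, dite_true, dite_false, reduceCtorEq, false_iff]
    exact fun h => hu (hv.of_zeroSetoid h)

end contract

variable (T w) in
theorem contraction_contract [Fintype V] :
    Contraction T w (imageGraph T (contract T w)) (fiberWeight w (contract T w))
      (contract T w) := by
  refine .of_imageGraph (fun a => ?_) (fun v hv => ?_) (fun v u h => ?_) (fun v u hvu h hv => ?_)
  · obtain ⟨⟨v, hv⟩, hq⟩ := Quotient.exists_rep ((Finite.equivFin _).symm a)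
    exact ⟨v, by simp [contract, hv, hq]⟩
  · exact weight_eq_zero_of_not_isKept (contract_eq_none_iff.1 hv)
  · by_cases hv : IsKept T w v
    · exact (contract_eq_contract_iff hv).2 (.inr h)
    · rw [contract_eq_none_iff.2 hv,
        contract_eq_none_iff.2 fun hu => hv (hu.of_zeroSetoid (.inr h.symm))]
  · have hk := not_not.1 (contract_eq_none_iff.not.1 hv)
    exact ((contract_eq_contract_iff hk).1 h).resolve_left hvu

end

/-- Every weighted tree of positive total weight can be transformed into a canonical
weighted tree of the same total weight by contracting maximal zero-weight subtrees and
deleting zero-weight leaves, and the resulting canonical weighted tree is unique up to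
isomorphism. -/
theorem stmt_19 {V : Type*} [Fintype V] (T : SimpleGraph V) (w : V → ℕ)
    (hT : T.IsTree) (hw : 0 < ∑ v, w v) :
    ∃ (V' : Type) (_ : Fintype V') (T' : SimpleGraph V') (w' : V' → ℕ) (φ : V → Option V'),
      Contraction T w T' w' φ ∧ T'.IsTree ∧ Canonical T' w' ∧
      (∑ᶠ v', w' v') = ∑ v, w v ∧
      ∀ (V'' : Type) (T'' : SimpleGraph V'') (w'' : V'' → ℕ) (φ' : V → Option V''),
        Contraction T w T'' w'' φ' → T''.IsTree → Canonical T'' w'' →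
        ∃ e : V' ≃ V'', (∀ x y, T'.Adj x y ↔ T''.Adj (e x) (e y)) ∧
          ∀ x, w'' (e x) = w' x := by
  have hpos : ∃ u, 0 < w u := by simpa using Finset.sum_pos_iff.1 hw
  have hc := contraction_contract T w
  obtain ⟨htree, hcan⟩ := (hc.isTree_and_canonical_iff hT hpos).2 fun _ => contract_eq_none_iff
  refine ⟨_, inferInstance, _, _, _, hc, htree, hcan, hc.finsum_weight,
    fun V'' T'' w'' φ' hc' htree' hcan' => hc.exists_equiv hc' fun v => ?_⟩
  rw [contract_eq_none_iff, (hc'.isTree_and_canonical_iff hT hpos).1 ⟨htree', hcan'⟩]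
end
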